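/- arXiv:math/0409221 — 4 statements merged into one kernel-verified Lean document; each statement's English description precedes it below -/
import Mathlib

section
/- For every holomorphic function f on the open unit disc D with finite L¹ norm and every a ∈ D, one has π·|f(a)|·(1−|a|²)² ≤ ∫_D |f| dA; that is, the hyperbolic norm of f at any point of D is at most (1/π) times its L¹ norm. -/
open MeasureTheory Metric

open Set Real
open scoped Real ENNReal

-- det of real-linear multiplication by c
lemma det_restrict_smulRight (c : ℂ) :
    (((1 : ℂ →L[ℂ] ℂ).smulRight c).restrictScalars ℝ).det = Complex.normSq c := by
  have h : ((((1 : ℂ →L[ℂ] ℂ).smulRight c).restrictScalars ℝ) : ℂ →ₗ[ℝ] ℂ)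
      = (Algebra.lmul ℝ ℂ) c := by
    ext w
    · simp [mul_comm]
  show LinearMap.det _ = _
  rw [h, ← Algebra.norm_apply, Algebra.norm_complex_apply]

-- lintegral polar coordinates, real version
lemma lintegral_comp_polarCoord_symm' (f : ℝ × ℝ → ℝ≥0∞) :
    (∫⁻ p in polarCoord.target, ENNReal.ofReal p.1 * f (polarCoord.symm p)) = ∫⁻ p, f p := by
  set B : ℝ × ℝ → ℝ × ℝ →L[ℝ] ℝ × ℝ := fun p =>
    LinearMap.toContinuousLinearMap (Matrix.toLin (Module.Basis.finTwoProd ℝ) (Module.Basis.finTwoProd ℝ)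
      !![Real.cos p.2, -p.1 * Real.sin p.2; Real.sin p.2, p.1 * Real.cos p.2]) with hB
  have A : ∀ p ∈ polarCoord.target, HasFDerivWithinAt polarCoord.symm (B p) polarCoord.target p :=
    fun p _ => (hasFDerivAt_polarCoord_symm p).hasFDerivWithinAt
  have B_det : ∀ p, (B p).det = p.1 := by
    intro p
    conv_rhs => rw [← one_mul p.1, ← cos_sq_add_sin_sq p.2]
    simp only [hB, neg_mul, LinearMap.det_toContinuousLinearMap, LinearMap.det_toLin,
      Matrix.det_fin_two_of, sub_neg_eq_add]
    ring
  have hinj : InjOn polarCoord.symm polarCoord.target := by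
    have := polarCoord.symm.injOn
    rwa [OpenPartialHomeomorph.symm_source] at this
  symm
  calc
    ∫⁻ p, f p = ∫⁻ p in polarCoord.source, f p := by
      rw [← setLIntegral_univ]
      exact (setLIntegral_congr polarCoord_source_ae_eq_univ).symm
    _ = ∫⁻ p in polarCoord.symm '' polarCoord.target, f p := by
      rw [polarCoord.symm_image_target_eq_source]
    _ = ∫⁻ p in polarCoord.target, ENNReal.ofReal |(B p).det| * f (polarCoord.symm p) :=
      lintegral_image_eq_lintegral_abs_det_fderiv_mul volume
        polarCoord.open_target.measurableSet A hinj f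
    _ = ∫⁻ p in polarCoord.target, ENNReal.ofReal p.1 * f (polarCoord.symm p) := by
      apply setLIntegral_congr_fun polarCoord.open_target.measurableSet
      intro p hp
      dsimp only
      rw [B_det, abs_of_pos hp.1]

-- lintegral polar coordinates, complex version
lemma Complex.lintegral_comp_polarCoord_symm' (f : ℂ → ℝ≥0∞) :
    (∫⁻ p in polarCoord.target, ENNReal.ofReal p.1 * f (Complex.polarCoord.symm p)) = ∫⁻ z, f z := by
  rw [← (Complex.volume_preserving_equiv_real_prod.symm).lintegral_comp_emb
    Complex.measurableEquivRealProd.symm.measurableEmbedding f,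
    ← _root_.lintegral_comp_polarCoord_symm' fun p => f (Complex.measurableEquivRealProd.symm p)]
  rfl

lemma cauchy_circle_bound (g : ℂ → ℂ) (hg : DifferentiableOn ℂ g (ball (0:ℂ) 1))
    {r : ℝ} (hr0 : 0 < r) (hr1 : r < 1) :
    ENNReal.ofReal (2 * π * ‖g 0‖) ≤ ∫⁻ θ in Ioo (-π) π, (‖g (circleMap 0 r θ)‖₊ : ℝ≥0∞) := by
  have hsub : closedBall (0:ℂ) r ⊆ ball (0:ℂ) 1 := closedBall_subset_ball hr1
  have hmem : ∀ θ : ℝ, circleMap 0 r θ ∈ ball (0:ℂ) 1 := by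
    intro θ
    simp only [mem_ball, dist_zero_right, norm_circleMap_zero]
    rwa [abs_of_pos hr0]
  have hcont : Continuous fun θ : ℝ => ‖g (circleMap 0 r θ)‖ :=
    (hg.continuousOn.comp_continuous (continuous_circleMap 0 r) hmem).norm
  -- Cauchy integral formula
  have hC := Complex.circleIntegral_sub_inv_smul_of_differentiable_on_off_countable
    (s := ∅) countable_empty (mem_ball_self hr0) (hg.continuousOn.mono hsub)
    (fun x hx => hg.differentiableAt (isOpen_ball.mem_nhds (ball_subset_ball hr1.le hx.1)))
  have key : 2 * π * ‖g 0‖ ≤ ∫ θ in (0:ℝ)..(2*π), ‖g (circleMap 0 r θ)‖ := by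
    have h1 : ‖(2 * (π:ℂ) * Complex.I) • g 0‖ = 2 * π * ‖g 0‖ := by
      simp [norm_smul, abs_of_nonneg Real.pi_pos.le]
    rw [← h1, ← hC]
    have h2 : ∀ θ : ℝ, ‖deriv (circleMap 0 r) θ • ((circleMap 0 r θ - 0)⁻¹ • g (circleMap 0 r θ))‖
        = ‖g (circleMap 0 r θ)‖ := by
      intro θ
      have hne : circleMap 0 r θ ≠ 0 := circleMap_ne_center hr0.ne'
      rw [deriv_circleMap, sub_zero, smul_smul]
      have : circleMap 0 r θ * Complex.I * (circleMap 0 r θ)⁻¹ = Complex.I := by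
        field_simp
      rw [this, norm_smul]
      simp
    calc ‖∮ z in C(0, r), (z - 0)⁻¹ • g z‖
        ≤ ∫ θ in (0:ℝ)..(2*π), ‖deriv (circleMap 0 r) θ •
            ((circleMap 0 r θ - 0)⁻¹ • g (circleMap 0 r θ))‖ :=
          intervalIntegral.norm_integral_le_integral_norm (by positivity)
      _ = ∫ θ in (0:ℝ)..(2*π), ‖g (circleMap 0 r θ)‖ := by
          simp only [h2]
  -- move to (-π, π) by periodicity
  have hper : Function.Periodic (fun θ : ℝ => ‖g (circleMap 0 r θ)‖) (2 * π) := by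
    intro θ
    simp [periodic_circleMap 0 r θ]
  have hshift : ∫ θ in (0:ℝ)..(2*π), ‖g (circleMap 0 r θ)‖
      = ∫ θ in Ioo (-π) π, ‖g (circleMap 0 r θ)‖ := by
    have := hper.intervalIntegral_add_eq (-π) 0
    simp only [zero_add] at this
    rw [← this, show -π + 2*π = π by ring, intervalIntegral.integral_of_le (by linarith [pi_pos]),
      integral_Ioc_eq_integral_Ioo]
  rw [hshift] at key
  have hint : IntegrableOn (fun θ : ℝ => ‖g (circleMap 0 r θ)‖) (Ioo (-π) π) :=
    (hcont.integrableOn_Icc).mono_set Ioo_subset_Icc_self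
  calc ENNReal.ofReal (2 * π * ‖g 0‖)
      ≤ ENNReal.ofReal (∫ θ in Ioo (-π) π, ‖g (circleMap 0 r θ)‖) := ENNReal.ofReal_le_ofReal key
    _ = ∫⁻ θ in Ioo (-π) π, ENNReal.ofReal ‖g (circleMap 0 r θ)‖ := by
        rw [ofReal_integral_eq_lintegral_ofReal hint]
        filter_upwards with θ using norm_nonneg _
    _ = ∫⁻ θ in Ioo (-π) π, (‖g (circleMap 0 r θ)‖₊ : ℝ≥0∞) := by
        simp_rw [ofReal_norm, enorm_eq_nnnorm]

lemma mean_value_lintegral (g : ℂ → ℂ) (hg : DifferentiableOn ℂ g (ball (0:ℂ) 1)) :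
    ENNReal.ofReal (π * ‖g 0‖) ≤ ∫⁻ z in ball (0:ℂ) 1, (‖g z‖₊ : ℝ≥0∞) := by
  classical
  set N : ℂ → ℝ≥0∞ := (ball (0:ℂ) 1).indicator (fun z => (‖g z‖₊ : ℝ≥0∞)) with hN
  have hNmeas : Measurable N := by
    rw [hN, ← Set.piecewise_eq_indicator]
    exact ContinuousOn.measurable_piecewise
      (ENNReal.continuous_coe.comp_continuousOn hg.continuousOn.nnnorm)
      continuousOn_const measurableSet_ball
  have hNball : ∀ z ∈ ball (0:ℂ) 1, N z = (‖g z‖₊ : ℝ≥0∞) := fun z hz =>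
    Set.indicator_of_mem hz _
  have hsymm_cont : Continuous (Complex.polarCoord.symm : ℝ × ℝ → ℂ) := by
    have h : (Complex.polarCoord.symm : ℝ × ℝ → ℂ)
        = fun p => p.1 * (Real.cos p.2 + Real.sin p.2 * Complex.I) :=
      funext Complex.polarCoord_symm_apply
    rw [h]; continuity
  set S : Set (ℝ × ℝ) := Ioo (0:ℝ) 1 ×ˢ Ioo (-π) π with hS
  have hSsub : S ⊆ polarCoord.target := by
    rintro ⟨r, θ⟩ ⟨h1, h2⟩
    exact ⟨h1.1, h2⟩
  set H : ℝ × ℝ → ℝ≥0∞ := fun p => ENNReal.ofReal p.1 * N (Complex.polarCoord.symm p) with hH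
  have hHmeas : Measurable H :=
    (ENNReal.measurable_ofReal.comp measurable_fst).mul (hNmeas.comp hsymm_cont.measurable)
  have step1 : ∫⁻ z in ball (0:ℂ) 1, (‖g z‖₊ : ℝ≥0∞) = ∫⁻ p in polarCoord.target, H p := by
    rw [← lintegral_indicator measurableSet_ball, ← hN,
      ← Complex.lintegral_comp_polarCoord_symm' N]
  have step2 : ∫⁻ p in S, H p ≤ ∫⁻ p in polarCoord.target, H p :=
    lintegral_mono_set hSsub
  have step3 : ∫⁻ p in S, H p = ∫⁻ r in Ioo (0:ℝ) 1, ∫⁻ θ in Ioo (-π) π, H (r, θ) := by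
    rw [hS, Measure.volume_eq_prod, ← Measure.prod_restrict,
      lintegral_prod _ hHmeas.aemeasurable]
  have hmemball : ∀ r ∈ Ioo (0:ℝ) 1, ∀ θ : ℝ,
      Complex.polarCoord.symm (r, θ) = circleMap 0 r θ ∧ circleMap 0 r θ ∈ ball (0:ℂ) 1 := by
    intro r hr θ
    constructor
    · rw [Complex.polarCoord_symm_apply, circleMap]
      simp [Complex.exp_mul_I]
    · simp only [mem_ball, dist_zero_right, norm_circleMap_zero]
      rw [abs_of_pos hr.1]; exact hr.2
  have step4 : ∀ r ∈ Ioo (0:ℝ) 1,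
      ENNReal.ofReal r * ENNReal.ofReal (2 * π * ‖g 0‖) ≤ ∫⁻ θ in Ioo (-π) π, H (r, θ) := by
    intro r hr
    have heq : ∫⁻ θ in Ioo (-π) π, H (r, θ)
        = ENNReal.ofReal r * ∫⁻ θ in Ioo (-π) π, (‖g (circleMap 0 r θ)‖₊ : ℝ≥0∞) := by
      rw [hH]
      simp only
      rw [lintegral_const_mul' _ _ ENNReal.ofReal_ne_top]
      congr 1
      apply setLIntegral_congr_fun measurableSet_Ioo
      intro θ hθ
      dsimp only
      rw [(hmemball r hr θ).1, hNball _ (hmemball r hr θ).2]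
    rw [heq]
    exact mul_le_mul_right (cauchy_circle_bound g hg hr.1 hr.2) _
  have step5 : ∫⁻ r in Ioo (0:ℝ) 1, ENNReal.ofReal r = ENNReal.ofReal (1/2 : ℝ) := by
    rw [← ofReal_integral_eq_lintegral_ofReal]
    · rw [← integral_Ioc_eq_integral_Ioo, ← intervalIntegral.integral_of_le zero_le_one,
        integral_id]
      norm_num
    · exact continuous_id.integrableOn_Icc.mono_set Ioo_subset_Icc_self
    · filter_upwards [ae_restrict_mem measurableSet_Ioo] with x hx using hx.1.le
  calc ENNReal.ofReal (π * ‖g 0‖)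
      = ENNReal.ofReal (1/2 : ℝ) * ENNReal.ofReal (2 * π * ‖g 0‖) := by
        rw [← ENNReal.ofReal_mul (by norm_num)]
        ring_nf
    _ = ∫⁻ r in Ioo (0:ℝ) 1, ENNReal.ofReal r * ENNReal.ofReal (2 * π * ‖g 0‖) := by
        rw [lintegral_mul_const' _ _ ENNReal.ofReal_ne_top, step5]
    _ ≤ ∫⁻ r in Ioo (0:ℝ) 1, ∫⁻ θ in Ioo (-π) π, H (r, θ) :=
        setLIntegral_mono' measurableSet_Ioo step4
    _ = ∫⁻ p in S, H p := step3.symm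
    _ ≤ ∫⁻ p in polarCoord.target, H p := step2
    _ = ∫⁻ z in ball (0:ℂ) 1, (‖g z‖₊ : ℝ≥0∞) := step1.symm

lemma mobius_norm_identity (a w : ℂ) :
    ‖1 + (starRingEnd ℂ) a * w‖^2 - ‖w + a‖^2 = (1 - ‖a‖^2) * (1 - ‖w‖^2) := by
  simp only [Complex.sq_norm, Complex.normSq_apply, Complex.add_re,
    Complex.add_im, Complex.mul_re, Complex.mul_im, Complex.conj_re, Complex.conj_im,
    Complex.one_re, Complex.one_im]
  ring


/-- For every holomorphic function `f` on the open unit disc `D`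
with finite `L¹` norm and every `a ∈ D`, one has
`π·|f a|·(1−|a|²)² ≤ ∫_D |f| dA`: the hyperbolic norm of the quadratic
differential `f dz²` at any point is at most `(1/π)` times its `L¹` norm. -/
theorem hyperbolic_norm_le_L1_norm (f : ℂ → ℂ)
    (hf : DifferentiableOn ℂ f (ball (0 : ℂ) 1))
    (hint : IntegrableOn f (ball (0 : ℂ) 1) volume)
    (a : ℂ) (ha : a ∈ ball (0 : ℂ) 1) :
    Real.pi * ‖f a‖ * (1 - ‖a‖ ^ 2) ^ 2 ≤ ∫ z in ball (0 : ℂ) 1, ‖f z‖ := by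
  have hball : ∀ w : ℂ, w ∈ ball (0:ℂ) 1 ↔ ‖w‖ < 1 := fun w => by
    simp [mem_ball, dist_zero_right]
  have ha1 : ‖a‖ < 1 := (hball a).1 ha
  set b : ℂ := (starRingEnd ℂ) a with hb
  set u : ℂ → ℂ := fun w => 1 + b * w with hu
  set φ : ℂ → ℂ := fun w => (w + a) / u w with hφ
  set d : ℂ → ℂ := fun w => (1 - b * a) / (u w)^2 with hd
  set G : ℂ → ℂ := fun w => f (φ w) * (d w)^2 with hG
  have hbnorm : ‖b‖ = ‖a‖ := by simp [hb]
  have key : ∀ w : ℂ, ‖u w‖^2 - ‖w + a‖^2 = (1 - ‖a‖^2) * (1 - ‖w‖^2) := by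
    intro w
    rw [hu]
    exact mobius_norm_identity a w
  have key' : ∀ z : ℂ, ‖1 - b * z‖^2 - ‖z - a‖^2 = (1 - ‖a‖^2) * (1 - ‖z‖^2) := by
    intro z
    have h := mobius_norm_identity (-a) z
    simp only [map_neg, neg_mul, ← sub_eq_add_neg, norm_neg] at h
    exact h
  have hune : ∀ w : ℂ, ‖w‖ < 1 → u w ≠ 0 := by
    intro w hw h0
    have h1 : ‖b * w‖ < 1 := by
      rw [norm_mul, hbnorm]
      nlinarith [norm_nonneg w, norm_nonneg a]
    have h2 : b * w = -1 := by
      have : (1 : ℂ) + b * w = 0 := h0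
      linear_combination this
    rw [h2] at h1
    simp at h1
  have hune' : ∀ z : ℂ, ‖z‖ < 1 → (1 : ℂ) - b * z ≠ 0 := by
    intro z hz h0
    have h1 : ‖b * z‖ < 1 := by
      rw [norm_mul, hbnorm]
      nlinarith [norm_nonneg z, norm_nonneg a]
    have h2 : b * z = 1 := by linear_combination -h0
    rw [h2] at h1
    simp at h1
  have hba : b * a = ((‖a‖^2 : ℝ) : ℂ) := by
    rw [hb, mul_comm, Complex.mul_conj, Complex.normSq_eq_norm_sq]
  have h1ba : (1 : ℂ) - b * a ≠ 0 := by
    rw [hba, ← Complex.ofReal_one, ← Complex.ofReal_sub, Ne, Complex.ofReal_eq_zero]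
    nlinarith [norm_nonneg a]
  have hmaps : ∀ w : ℂ, ‖w‖ < 1 → ‖φ w‖ < 1 := by
    intro w hw
    have hu0 : u w ≠ 0 := hune w hw
    have hupos : 0 < ‖u w‖ := norm_pos_iff.2 hu0
    rw [hφ]
    simp only [norm_div]
    rw [div_lt_one hupos]
    have hA : 0 < 1 - ‖a‖^2 := by nlinarith [norm_nonneg a]
    have hW : 0 < 1 - ‖w‖^2 := by nlinarith [norm_nonneg w]
    nlinarith [key w, mul_pos hA hW, norm_nonneg (w + a), norm_nonneg (u w)]
  have hmapsTo : Set.MapsTo φ (ball (0:ℂ) 1) (ball (0:ℂ) 1) := fun w hw =>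
    (hball _).2 (hmaps w ((hball w).1 hw))
  have hinj : Set.InjOn φ (ball (0:ℂ) 1) := by
    intro x hx y hy hxy
    have hxu : u x ≠ 0 := hune x ((hball x).1 hx)
    have hyu : u y ≠ 0 := hune y ((hball y).1 hy)
    rw [hφ] at hxy
    simp only at hxy
    rw [div_eq_div_iff hxu hyu] at hxy
    simp only [hu] at hxy
    have h0 : (x - y) * (1 - b * a) = 0 := by linear_combination hxy
    rcases mul_eq_zero.1 h0 with h | h
    · exact sub_eq_zero.1 h
    · exact absurd h h1ba
  have himg : φ '' ball (0:ℂ) 1 = ball (0:ℂ) 1 := by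
    apply Set.Subset.antisymm
    · rintro z ⟨w, hw, rfl⟩
      exact hmapsTo hw
    · intro z hz
      have hz1 : ‖z‖ < 1 := (hball z).1 hz
      have hbz : (1 : ℂ) - b * z ≠ 0 := hune' z hz1
      set ψz : ℂ := (z - a) / (1 - b * z) with hψz
      have hψnorm : ‖ψz‖ < 1 := by
        have hpos : 0 < ‖(1:ℂ) - b * z‖ := norm_pos_iff.2 hbz
        rw [hψz]
        simp only [norm_div]
        rw [div_lt_one hpos]
        have hA : 0 < 1 - ‖a‖^2 := by nlinarith [norm_nonneg a]
        have hW : 0 < 1 - ‖z‖^2 := by nlinarith [norm_nonneg z]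
        nlinarith [key' z, mul_pos hA hW, norm_nonneg (z - a), norm_nonneg ((1:ℂ) - b * z)]
      refine ⟨ψz, (hball ψz).2 hψnorm, ?_⟩
      have e3 : u ψz = (1 - b * a) / (1 - b * z) := by
        simp only [hu, hψz]
        field_simp
        ring
      have e4 : ψz + a = z * (1 - b * a) / (1 - b * z) := by
        rw [hψz]
        rw [div_add' _ _ _ hbz]; congr 1
        ring
      rw [hφ]
      simp only
      rw [e4, e3]
      field_simp
      exact mul_div_cancel_right₀ z (by rw [mul_comm]; exact hbz)
  have hderiv : ∀ w ∈ ball (0:ℂ) 1, HasDerivAt φ (d w) w := by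
    intro w hw
    have hw1 : ‖w‖ < 1 := (hball w).1 hw
    have h1 : HasDerivAt (fun y : ℂ => y + a) 1 w := (hasDerivAt_id w).add_const a
    have h2 : HasDerivAt u b w := by
      rw [hu]
      simpa using ((hasDerivAt_id w).const_mul b).const_add 1
    have h3 := h1.div h2 (hune w hw1)
    have h4 : (1 * u w - (w + a) * b) / (u w)^2 = d w := by
      rw [hd]
      congr 1
      simp only [hu]
      ring
    rw [h4] at h3
    exact h3
  have hGdiff : DifferentiableOn ℂ G (ball (0:ℂ) 1) := by
    have hφd : DifferentiableOn ℂ φ (ball (0:ℂ) 1) := fun w hw =>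
      ((hderiv w hw).differentiableAt).differentiableWithinAt
    have hfφ : DifferentiableOn ℂ (fun w => f (φ w)) (ball (0:ℂ) 1) := hf.comp hφd hmapsTo
    have hdd : DifferentiableOn ℂ d (ball (0:ℂ) 1) := by
      rw [hd]
      apply DifferentiableOn.div (differentiableOn_const _)
      · exact (((differentiable_id.const_mul b).const_add 1).pow 2).differentiableOn
      · intro w hw
        exact pow_ne_zero 2 (hune w ((hball w).1 hw))
    rw [hG]
    exact hfφ.mul (hdd.pow 2)
  -- change of variables
  have hfd : ∀ w ∈ ball (0:ℂ) 1, HasFDerivWithinAt φ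
      (((1 : ℂ →L[ℂ] ℂ).smulRight (d w)).restrictScalars ℝ) (ball (0:ℂ) 1) w :=
    fun w hw => (((hderiv w hw).hasFDerivAt).restrictScalars ℝ).hasFDerivWithinAt
  have hCoV := lintegral_image_eq_lintegral_abs_det_fderiv_mul volume measurableSet_ball hfd hinj
    (fun z => (‖f z‖₊ : ℝ≥0∞))
  rw [himg] at hCoV
  have hGf : ∫⁻ z in ball (0:ℂ) 1, (‖f z‖₊ : ℝ≥0∞) = ∫⁻ w in ball (0:ℂ) 1, (‖G w‖₊ : ℝ≥0∞) := by
    rw [hCoV]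
    apply setLIntegral_congr_fun measurableSet_ball
    intro w hw
    dsimp only
    rw [det_restrict_smulRight]
    have h1 : |Complex.normSq (d w)| = ‖(d w)^2‖ := by
      rw [abs_of_nonneg (Complex.normSq_nonneg _), ← Complex.sq_norm,
        norm_pow]
    rw [h1, ofReal_norm, enorm_eq_nnnorm, hG]
    simp only
    rw [nnnorm_mul, ENNReal.coe_mul, mul_comm]
  have hMV := mean_value_lintegral G hGdiff
  have hG0 : ‖G 0‖ = ‖f a‖ * (1 - ‖a‖^2)^2 := by
    have hφ0 : φ 0 = a := by simp [hφ, hu]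
    have hd0 : d 0 = 1 - b * a := by simp [hd, hu]
    have hn : ‖(1 : ℂ) - b * a‖ = 1 - ‖a‖^2 := by
      rw [hba, ← Complex.ofReal_one, ← Complex.ofReal_sub, Complex.norm_real]
      apply abs_of_nonneg
      nlinarith [norm_nonneg a]
    rw [hG]
    simp only [hφ0, hd0]
    rw [norm_mul, norm_pow, hn]
  have hfin : ∫⁻ z in ball (0:ℂ) 1, (‖f z‖₊ : ℝ≥0∞) ≠ ⊤ := hint.2.ne
  have hRHS : ∫ z in ball (0:ℂ) 1, ‖f z‖
      = (∫⁻ z in ball (0:ℂ) 1, (‖f z‖₊ : ℝ≥0∞)).toReal :=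
    integral_norm_eq_lintegral_enorm hint.1
  calc Real.pi * ‖f a‖ * (1 - ‖a‖^2)^2 = π * ‖G 0‖ := by rw [hG0]; ring
    _ = (ENNReal.ofReal (π * ‖G 0‖)).toReal := (ENNReal.toReal_ofReal (by positivity)).symm
    _ ≤ (∫⁻ w in ball (0:ℂ) 1, (‖G w‖₊ : ℝ≥0∞)).toReal :=
        ENNReal.toReal_mono (by rw [← hGf]; exact hfin) hMV
    _ = (∫⁻ z in ball (0:ℂ) 1, (‖f z‖₊ : ℝ≥0∞)).toReal := by rw [hGf]
    _ = ∫ z in ball (0:ℂ) 1, ‖f z‖ := hRHS.symm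
end

section
/- There exists a function C : (0,∞) → (0,∞) such that for every r > 0, every r-separated subset T of D, and every z ∈ D, one has Σ_{t∈T} (1−|t|²)²·(1−|z|²)²/|1−conj(t)·z|⁴ ≤ C(r). -/
open Metric
open scoped ENNReal NNReal

/-- The inverse hyperbolic tangent, `arctanh x = ½ log((1+x)/(1−x))`. -/
noncomputable def arctanh (x : ℝ) : ℝ := Real.log ((1 + x) / (1 - x)) / 2

/-- The hyperbolic distance on the unit disc:
`d(a,z) = arctanh |(a−z)/(1−conj(a)·z)|`. -/
noncomputable def hdist (a z : ℂ) : ℝ :=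
  arctanh ‖(a - z) / (1 - (starRingEnd ℂ) a * z)‖

/-- A subset `T` of the disc is `r`-separated if two distinct points of `T` are
at hyperbolic distance at least `r`. -/
def IsSeparated (r : ℝ) (T : Set ℂ) : Prop :=
  ∀ t ∈ T, ∀ t' ∈ T, t ≠ t' → r ≤ hdist t t'

private lemma norm_sq_key (u v : ℂ) :
    ‖1 - (starRingEnd ℂ) u * v‖ ^ 2 = ‖u - v‖ ^ 2 + (1 - ‖u‖ ^ 2) * (1 - ‖v‖ ^ 2) := by
  have h : ∀ w : ℂ, ‖w‖ ^ 2 = Complex.normSq w := fun w => by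
    rw [Complex.sq_norm]
  rw [h, h, h, h]
  simp only [Complex.normSq_apply, Complex.sub_re, Complex.sub_im, Complex.mul_re,
    Complex.mul_im, Complex.conj_re, Complex.conj_im, Complex.one_re, Complex.one_im]
  ring

private lemma key_lt {u v : ℂ} (hu : ‖u‖ < 1) (hv : ‖v‖ < 1) :
    ‖u - v‖ < ‖1 - (starRingEnd ℂ) u * v‖ := by
  have h := norm_sq_key u v
  have h1 : 0 < 1 - ‖u‖ ^ 2 := by nlinarith [norm_nonneg u]
  have h2 : 0 < 1 - ‖v‖ ^ 2 := by nlinarith [norm_nonneg v]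
  have hP : 0 < (1 - ‖u‖ ^ 2) * (1 - ‖v‖ ^ 2) := mul_pos h1 h2
  exact lt_of_pow_lt_pow_left₀ 2 (norm_nonneg _) (by linarith)

private lemma sub_invariance (z t t' : ℂ) (hd : (1 - (starRingEnd ℂ) z * t) ≠ 0)
    (hd' : (1 - (starRingEnd ℂ) z * t') ≠ 0) :
    (t - z) / (1 - (starRingEnd ℂ) z * t) - (t' - z) / (1 - (starRingEnd ℂ) z * t')
      = (t - t') * (1 - (starRingEnd ℂ) z * z)
        / ((1 - (starRingEnd ℂ) z * t) * (1 - (starRingEnd ℂ) z * t')) := by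
  rw [div_sub_div _ _ hd hd']
  congr 1
  ring

private lemma one_sub_invariance (z t t' : ℂ) (hd : (1 - (starRingEnd ℂ) z * t) ≠ 0)
    (hd' : (1 - (starRingEnd ℂ) z * t') ≠ 0) :
    1 - (starRingEnd ℂ) ((t - z) / (1 - (starRingEnd ℂ) z * t))
        * ((t' - z) / (1 - (starRingEnd ℂ) z * t'))
      = (1 - (starRingEnd ℂ) t * t') * (1 - (starRingEnd ℂ) z * z)
        / ((starRingEnd ℂ) (1 - (starRingEnd ℂ) z * t) * (1 - (starRingEnd ℂ) z * t')) := by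
  have hdc : (starRingEnd ℂ) (1 - (starRingEnd ℂ) z * t) ≠ 0 := by
    intro h
    apply hd
    have := congrArg (starRingEnd ℂ) h
    simpa using this
  rw [map_div₀, div_mul_div_comm, eq_div_iff (mul_ne_zero hdc hd'), sub_mul, one_mul,
    div_mul_cancel₀ _ (mul_ne_zero hdc hd')]
  simp only [map_sub, map_mul, Complex.conj_conj, map_one]
  ring

/-- There is a function `C : (0,∞) → (0,∞)` such that for
every `r > 0`, every `r`-separated subset `T ⊆ D` and every `z ∈ D`,
`Σ_{t∈T} (1−|t|²)²·(1−|z|²)²/|1−conj(t)·z|⁴ ≤ C r`. -/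
theorem summed_kernel_bound :
    ∃ C : ℝ → ℝ, ∀ r > (0 : ℝ), 0 < C r ∧
      ∀ T : Set ℂ, T ⊆ ball (0 : ℂ) 1 → IsSeparated r T →
        ∀ z ∈ ball (0 : ℂ) 1,
          Summable (fun t : T =>
            (1 - ‖(t : ℂ)‖ ^ 2) ^ 2 * (1 - ‖z‖ ^ 2) ^ 2
              / ‖1 - (starRingEnd ℂ) (t : ℂ) * z‖ ^ 4) ∧
          (∑' t : T, (1 - ‖(t : ℂ)‖ ^ 2) ^ 2 * (1 - ‖z‖ ^ 2) ^ 2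
              / ‖1 - (starRingEnd ℂ) (t : ℂ) * z‖ ^ 4) ≤ C r := by
  refine ⟨fun r => 64 / ((Real.exp (2 * r) - 1) / (Real.exp (2 * r) + 1)) ^ 2,
    fun r hr => ?_⟩
  have he1 : 1 < Real.exp (2 * r) := by
    rw [show (1 : ℝ) = Real.exp 0 by simp]
    exact Real.exp_lt_exp.mpr (by linarith)
  set δ : ℝ := (Real.exp (2 * r) - 1) / (Real.exp (2 * r) + 1) with hδdef
  have hδ0 : 0 < δ := div_pos (by linarith) (by linarith)
  have hδ1 : δ < 1 := by
    rw [hδdef, div_lt_one (by linarith)]; linarith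
  refine ⟨by positivity, ?_⟩
  intro T hT hsep z hzmem
  have hz : ‖z‖ < 1 := mem_ball_zero_iff.mp hzmem
  have hz2 : 0 < 1 - ‖z‖ ^ 2 := by nlinarith [norm_nonneg z]
  -- `δ` is a lower bound on the pseudo-hyperbolic distance of `r`-separated points
  have harc : ∀ ρ : ℝ, 0 ≤ ρ → ρ < 1 → r ≤ arctanh ρ → δ ≤ ρ := by
    intro ρ h0 h1 hle
    by_contra hc
    push_neg at hc
    have h3 : ρ * (Real.exp (2 * r) + 1) < Real.exp (2 * r) - 1 :=
      (lt_div_iff₀ (by linarith)).mp hc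
    have h2 : (1 + ρ) / (1 - ρ) < Real.exp (2 * r) := by
      rw [div_lt_iff₀ (by linarith)]
      nlinarith
    have h4 : arctanh ρ < r := by
      have hpos : (0 : ℝ) < (1 + ρ) / (1 - ρ) := div_pos (by linarith) (by linarith)
      have := (Real.log_lt_iff_lt_exp hpos).mpr h2
      unfold arctanh
      linarith
    linarith
  have hmem : ∀ t : T, ‖(t : ℂ)‖ < 1 := fun t => mem_ball_zero_iff.mp (hT t.2)
  have hdpos : ∀ u v : ℂ, ‖u‖ < 1 → ‖v‖ < 1 → 0 < ‖1 - (starRingEnd ℂ) u * v‖ :=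
    fun u v hu hv => (norm_nonneg _).trans_lt (key_lt hu hv)
  have hdne : ∀ t : ℂ, ‖t‖ < 1 → (1 - (starRingEnd ℂ) z * t) ≠ 0 :=
    fun t ht => norm_pos_iff.mp (hdpos z t hz ht)
  set w : ℂ → ℂ := fun t => (t - z) / (1 - (starRingEnd ℂ) z * t) with hwdef
  have hwlt : ∀ t : ℂ, ‖t‖ < 1 → ‖w t‖ < 1 := by
    intro t ht
    rw [hwdef]
    simp only [norm_div]
    rw [div_lt_one (hdpos z t hz ht)]
    calc ‖t - z‖ = ‖z - t‖ := norm_sub_rev t z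
      _ < ‖1 - (starRingEnd ℂ) z * t‖ := key_lt hz ht
  have hnormflip : ∀ t : ℂ, ‖1 - (starRingEnd ℂ) t * z‖ = ‖1 - (starRingEnd ℂ) z * t‖ := by
    intro t
    rw [show (1 : ℂ) - (starRingEnd ℂ) t * z = (starRingEnd ℂ) (1 - (starRingEnd ℂ) z * t) by
      simp only [map_sub, map_mul, Complex.conj_conj, map_one]; ring]
    exact RCLike.norm_conj _
  -- the kernel in terms of `w`
  have hker : ∀ t : ℂ, ‖t‖ < 1 →
      (1 - ‖t‖ ^ 2) ^ 2 * (1 - ‖z‖ ^ 2) ^ 2 / ‖1 - (starRingEnd ℂ) t * z‖ ^ 4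
        = (1 - ‖w t‖ ^ 2) ^ 2 := by
    intro t ht
    have hd2 : (0 : ℝ) < ‖1 - (starRingEnd ℂ) z * t‖ ^ 2 := pow_pos (hdpos z t hz ht) 2
    have hw2 : ‖w t‖ ^ 2 = ‖t - z‖ ^ 2 / ‖1 - (starRingEnd ℂ) z * t‖ ^ 2 := by
      rw [hwdef]; simp only [norm_div]; rw [div_pow]
    have hkey := norm_sq_key z t
    have hzt2 : ‖z - t‖ ^ 2 = ‖t - z‖ ^ 2 := by rw [norm_sub_rev]
    have h1 : 1 - ‖w t‖ ^ 2
        = (1 - ‖t‖ ^ 2) * (1 - ‖z‖ ^ 2) / ‖1 - (starRingEnd ℂ) z * t‖ ^ 2 := by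
      rw [hw2, eq_div_iff hd2.ne', sub_mul, one_mul, div_mul_cancel₀ _ hd2.ne']
      linear_combination hkey + hzt2
    rw [hnormflip t, h1, div_pow,
      show (‖1 - (starRingEnd ℂ) z * t‖ ^ 2) ^ 2 = ‖1 - (starRingEnd ℂ) z * t‖ ^ 4 by ring]
    congr 1
    ring
  -- norm of the invariant factor
  have hzz : (1 : ℂ) - (starRingEnd ℂ) z * z = ((1 - ‖z‖ ^ 2 : ℝ) : ℂ) := by
    have h : (starRingEnd ℂ) z * z = ((‖z‖ ^ 2 : ℝ) : ℂ) := by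
      rw [mul_comm, Complex.mul_conj]
      norm_cast
      rw [← Complex.sq_norm]
    rw [h]
    push_cast
    ring
  have hzznorm : ‖(1 : ℂ) - (starRingEnd ℂ) z * z‖ = 1 - ‖z‖ ^ 2 := by
    rw [hzz, Complex.norm_real, Real.norm_eq_abs, abs_of_pos hz2]
  -- separation of the `w` points
  have hsepw : ∀ t t' : T, t ≠ t' →
      δ * ‖1 - (starRingEnd ℂ) (w t) * (w t')‖ ≤ ‖w (t : ℂ) - w (t' : ℂ)‖ := by
    intro t t' hne
    have ha := hmem t
    have hb := hmem t'
    have hne' : (t : ℂ) ≠ (t' : ℂ) := Subtype.coe_injective.ne hne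
    have hdb : 0 < ‖1 - (starRingEnd ℂ) (t : ℂ) * (t' : ℂ)‖ := hdpos _ _ ha hb
    -- base separation in pseudo-hyperbolic distance
    have hbase : δ * ‖1 - (starRingEnd ℂ) (t : ℂ) * (t' : ℂ)‖ ≤ ‖(t : ℂ) - (t' : ℂ)‖ := by
      have hρ := hsep t t.2 t' t'.2 hne'
      rw [hdist] at hρ
      set ρ : ℝ := ‖((t : ℂ) - (t' : ℂ)) / (1 - (starRingEnd ℂ) (t : ℂ) * (t' : ℂ))‖ with hρdef
      have hρeq : ρ = ‖(t : ℂ) - (t' : ℂ)‖ / ‖1 - (starRingEnd ℂ) (t : ℂ) * (t' : ℂ)‖ := by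
        rw [hρdef, norm_div]
      have hρ1 : ρ < 1 := by
        rw [hρeq, div_lt_one hdb]
        exact key_lt ha hb
      have hδρ : δ ≤ ρ := harc ρ (norm_nonneg _) hρ1 hρ
      calc δ * ‖1 - (starRingEnd ℂ) (t : ℂ) * (t' : ℂ)‖
          ≤ ρ * ‖1 - (starRingEnd ℂ) (t : ℂ) * (t' : ℂ)‖ :=
            mul_le_mul_of_nonneg_right hδρ hdb.le
        _ = ‖(t : ℂ) - (t' : ℂ)‖ := by rw [hρeq, div_mul_cancel₀ _ hdb.ne']
    -- transfer via the invariance identities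
    have hA := sub_invariance z (t : ℂ) (t' : ℂ) (hdne _ ha) (hdne _ hb)
    have hB := one_sub_invariance z (t : ℂ) (t' : ℂ) (hdne _ ha) (hdne _ hb)
    have hdanorm : 0 < ‖1 - (starRingEnd ℂ) z * (t : ℂ)‖ := hdpos z _ hz ha
    have hdbnorm : 0 < ‖1 - (starRingEnd ℂ) z * (t' : ℂ)‖ := hdpos z _ hz hb
    have hAn : ‖w (t : ℂ) - w (t' : ℂ)‖
        = ‖(t : ℂ) - (t' : ℂ)‖ * (1 - ‖z‖ ^ 2)
          / (‖1 - (starRingEnd ℂ) z * (t : ℂ)‖ * ‖1 - (starRingEnd ℂ) z * (t' : ℂ)‖) := by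
      rw [hwdef]
      simp only []
      rw [hA, norm_div, norm_mul, norm_mul, hzznorm]
    have hBn : ‖1 - (starRingEnd ℂ) (w t) * (w t')‖
        = ‖1 - (starRingEnd ℂ) (t : ℂ) * (t' : ℂ)‖ * (1 - ‖z‖ ^ 2)
          / (‖1 - (starRingEnd ℂ) z * (t : ℂ)‖ * ‖1 - (starRingEnd ℂ) z * (t' : ℂ)‖) := by
      rw [hwdef]
      simp only []
      rw [hB, norm_div, norm_mul, norm_mul, hzznorm, RCLike.norm_conj]
    rw [hAn, hBn]
    have hX : (0:ℝ) < ‖1 - (starRingEnd ℂ) z * (t : ℂ)‖ * ‖1 - (starRingEnd ℂ) z * (t' : ℂ)‖ :=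
      mul_pos hdanorm hdbnorm
    have hmain : δ * (‖1 - (starRingEnd ℂ) (t : ℂ) * (t' : ℂ)‖ * (1 - ‖z‖ ^ 2))
        ≤ ‖(t : ℂ) - (t' : ℂ)‖ * (1 - ‖z‖ ^ 2) := by
      nlinarith [mul_le_mul_of_nonneg_right hbase hz2.le]
    calc δ * (‖1 - (starRingEnd ℂ) (t : ℂ) * (t' : ℂ)‖ * (1 - ‖z‖ ^ 2)
            / (‖1 - (starRingEnd ℂ) z * (t : ℂ)‖ * ‖1 - (starRingEnd ℂ) z * (t' : ℂ)‖))
        = δ * (‖1 - (starRingEnd ℂ) (t : ℂ) * (t' : ℂ)‖ * (1 - ‖z‖ ^ 2))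
            / (‖1 - (starRingEnd ℂ) z * (t : ℂ)‖ * ‖1 - (starRingEnd ℂ) z * (t' : ℂ)‖) := by
          ring
      _ ≤ ‖(t : ℂ) - (t' : ℂ)‖ * (1 - ‖z‖ ^ 2)
            / (‖1 - (starRingEnd ℂ) z * (t : ℂ)‖ * ‖1 - (starRingEnd ℂ) z * (t' : ℂ)‖) := by
          gcongr
  -- the disjoint family of Euclidean balls
  set ν : T → Set ℂ := fun t => Metric.ball (w t) (δ * (1 - ‖w (t : ℂ)‖ ^ 2) / 4) with hνdef
  have hwl : ∀ t : T, ‖w (t : ℂ)‖ < 1 := fun t => hwlt _ (hmem t)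
  have hw2pos : ∀ t : T, 0 < 1 - ‖w (t : ℂ)‖ ^ 2 := by
    intro t
    nlinarith [hwl t, norm_nonneg (w (t : ℂ))]
  have hrad : ∀ t : T, 0 < δ * (1 - ‖w (t : ℂ)‖ ^ 2) / 4 := by
    intro t
    have := hw2pos t
    positivity
  have hdisj : Pairwise (Function.onFun Disjoint ν) := by
    intro t t' hne
    apply Metric.ball_disjoint_ball
    rw [dist_eq_norm]
    have h5 := hsepw t t' hne
    have hub : 1 - ‖w (t : ℂ)‖ * ‖w (t' : ℂ)‖ ≤ ‖1 - (starRingEnd ℂ) (w t) * (w t')‖ := by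
      calc 1 - ‖w (t : ℂ)‖ * ‖w (t' : ℂ)‖
          = ‖(1 : ℂ)‖ - ‖(starRingEnd ℂ) (w t) * (w t')‖ := by
            rw [norm_one, norm_mul, RCLike.norm_conj]
        _ ≤ ‖1 - (starRingEnd ℂ) (w t) * (w t')‖ := norm_sub_norm_le _ _
    have e1 : δ * (1 - ‖w (t : ℂ)‖ * ‖w (t' : ℂ)‖)
        ≤ δ * ‖1 - (starRingEnd ℂ) (w t) * (w t')‖ :=
      mul_le_mul_of_nonneg_left hub hδ0.le
    have e2 : δ * (2 * (‖w (t : ℂ)‖ * ‖w (t' : ℂ)‖))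
        ≤ δ * (‖w (t : ℂ)‖ ^ 2 + ‖w (t' : ℂ)‖ ^ 2) :=
      mul_le_mul_of_nonneg_left (by nlinarith [sq_nonneg (‖w (t : ℂ)‖ - ‖w (t' : ℂ)‖)]) hδ0.le
    nlinarith [norm_nonneg (w (t : ℂ) - w (t' : ℂ))]
  have hcount : Countable T := by
    apply Set.countable_univ_iff.mp
    apply Set.PairwiseDisjoint.countable_of_nonempty_interior (s := ν)
      (hdisj.set_pairwise _)
    intro t _
    rw [Metric.isOpen_ball.interior_eq]
    exact Metric.nonempty_ball.mpr (hrad t)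
  have hpi : ((NNReal.pi : ℝ≥0∞)) = ENNReal.ofReal Real.pi := by
    rw [← NNReal.coe_real_pi, ENNReal.ofReal_coe_nnreal]
  set c : ℝ := Real.pi * δ ^ 2 / 16 with hcdef
  have hc0 : 0 < c := by
    rw [hcdef]
    positivity
  have hvol : ∀ t : T, MeasureTheory.volume (ν t)
      = ENNReal.ofReal (c * (1 - ‖w (t : ℂ)‖ ^ 2) ^ 2) := by
    intro t
    rw [hνdef]
    simp only []
    rw [Complex.volume_ball, ← ENNReal.ofReal_pow (hrad t).le, hpi,
      ← ENNReal.ofReal_mul (by positivity)]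
    congr 1
    rw [hcdef]
    ring
  have hsub : ∀ t : T, ν t ⊆ Metric.ball (0 : ℂ) 2 := by
    intro t x hx
    rw [Metric.mem_ball] at hx ⊢
    have h6 := dist_triangle x (w (t : ℂ)) 0
    simp only [dist_zero_right] at h6 ⊢
    have h7 : δ * (1 - ‖w (t : ℂ)‖ ^ 2) / 4 ≤ 1 := by nlinarith [hw2pos t, norm_nonneg (w (t : ℂ))]
    have := hwl t
    linarith [hx]
  have hsum : ∑' t : T, ENNReal.ofReal (c * (1 - ‖w (t : ℂ)‖ ^ 2) ^ 2)
      = MeasureTheory.volume (⋃ t : T, ν t) := by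
    rw [MeasureTheory.measure_iUnion hdisj (fun t => Metric.isOpen_ball.measurableSet)]
    exact tsum_congr fun t => (hvol t).symm
  have hvol2 : MeasureTheory.volume (Metric.ball (0 : ℂ) 2) = ENNReal.ofReal (4 * Real.pi) := by
    rw [Complex.volume_ball, hpi, ← ENNReal.ofReal_pow (by norm_num : (0:ℝ) ≤ 2),
      ← ENNReal.ofReal_mul (by norm_num)]
    norm_num
  -- the ENNReal bound
  have key : (∑' t : T, ENNReal.ofReal ((1 - ‖(t : ℂ)‖ ^ 2) ^ 2 * (1 - ‖z‖ ^ 2) ^ 2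
      / ‖1 - (starRingEnd ℂ) (t : ℂ) * z‖ ^ 4)) ≤ ENNReal.ofReal (64 / δ ^ 2) := by
    calc (∑' t : T, ENNReal.ofReal ((1 - ‖(t : ℂ)‖ ^ 2) ^ 2 * (1 - ‖z‖ ^ 2) ^ 2
          / ‖1 - (starRingEnd ℂ) (t : ℂ) * z‖ ^ 4))
        = ∑' t : T, ENNReal.ofReal c⁻¹ * ENNReal.ofReal (c * (1 - ‖w (t : ℂ)‖ ^ 2) ^ 2) := by
          refine tsum_congr fun t => ?_
          rw [hker _ (hmem t), ← ENNReal.ofReal_mul (inv_nonneg.mpr hc0.le)]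
          congr 1
          field_simp
      _ = ENNReal.ofReal c⁻¹ * ∑' t : T, ENNReal.ofReal (c * (1 - ‖w (t : ℂ)‖ ^ 2) ^ 2) :=
          ENNReal.tsum_mul_left
      _ = ENNReal.ofReal c⁻¹ * MeasureTheory.volume (⋃ t : T, ν t) := by rw [hsum]
      _ ≤ ENNReal.ofReal c⁻¹ * ENNReal.ofReal (4 * Real.pi) := by
          refine mul_le_mul_right ?_ _
          rw [← hvol2]
          exact MeasureTheory.measure_mono (Set.iUnion_subset hsub)
      _ = ENNReal.ofReal (c⁻¹ * (4 * Real.pi)) := (ENNReal.ofReal_mul (by positivity)).symm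
      _ = ENNReal.ofReal (64 / δ ^ 2) := by
          congr 1
          rw [hcdef]
          field_simp [Real.pi_ne_zero]
          ring
  have hnn : ∀ t : T, 0 ≤ (1 - ‖(t : ℂ)‖ ^ 2) ^ 2 * (1 - ‖z‖ ^ 2) ^ 2
      / ‖1 - (starRingEnd ℂ) (t : ℂ) * z‖ ^ 4 := fun t => by positivity
  have hfin : (∑' t : T, ENNReal.ofReal ((1 - ‖(t : ℂ)‖ ^ 2) ^ 2 * (1 - ‖z‖ ^ 2) ^ 2
      / ‖1 - (starRingEnd ℂ) (t : ℂ) * z‖ ^ 4)) ≠ ⊤ :=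
    (key.trans_lt ENNReal.ofReal_lt_top).ne
  have hsummable : Summable (fun t : T => (1 - ‖(t : ℂ)‖ ^ 2) ^ 2 * (1 - ‖z‖ ^ 2) ^ 2
      / ‖1 - (starRingEnd ℂ) (t : ℂ) * z‖ ^ 4) := by
    have h8 := ENNReal.summable_toReal hfin
    have h9 : (fun t : T => (ENNReal.ofReal ((1 - ‖(t : ℂ)‖ ^ 2) ^ 2 * (1 - ‖z‖ ^ 2) ^ 2
        / ‖1 - (starRingEnd ℂ) (t : ℂ) * z‖ ^ 4)).toReal)
        = fun t : T => (1 - ‖(t : ℂ)‖ ^ 2) ^ 2 * (1 - ‖z‖ ^ 2) ^ 2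
        / ‖1 - (starRingEnd ℂ) (t : ℂ) * z‖ ^ 4 :=
      funext fun t => ENNReal.toReal_ofReal (hnn t)
    rwa [h9] at h8
  refine ⟨hsummable, ?_⟩
  have h10 := ENNReal.ofReal_tsum_of_nonneg hnn hsummable
  rw [← h10] at key
  exact (ENNReal.ofReal_le_ofReal_iff (by positivity)).mp key
end

section
/- There exists a function Dr : (0,∞) → (0,∞) with Dr(r) → 0 as r → ∞ such that the following holds: for every r > 0, every r-separated subset T ⊆ D, and every family of weights c : T → ℂ with M := sup_{t∈T} |c_t|(1−|t|²)² < ∞, the Fuchsian series σ(z) = Σ_{t∈T} c_t·(1−|t|²)⁴/(1−conj(t)·z)⁴ satisfies |σ(x) − c_x|·(1−|x|²)² ≤ Dr(r)·M for every x ∈ T. -/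
open Metric Filter

/-- The minimizing extension of the quadratic differential `c dz²` at `a`:
`z ↦ c·(1−|a|²)⁴/(1−conj(a)·z)⁴`. -/
noncomputable def minExt (a c : ℂ) : ℂ → ℂ :=
  fun z => c * (((1 - ‖a‖ ^ 2 : ℝ) : ℂ)) ^ 4 / (1 - (starRingEnd ℂ) a * z) ^ 4

local notation "conj'" => starRingEnd ℂ

open MeasureTheory

noncomputable def tnh (r : ℝ) : ℝ := 1 - 2 / (Real.exp (2*r) + 1)

lemma exp2_pos (r : ℝ) : 0 < Real.exp (2*r) + 1 := by positivity

lemma tnh_lt_one (r : ℝ) : tnh r < 1 := by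
  have := exp2_pos r
  have : 0 < 2 / (Real.exp (2*r) + 1) := by positivity
  unfold tnh
  linarith

lemma tnh_nonneg {r : ℝ} (hr : 0 ≤ r) : 0 ≤ tnh r := by
  have h1 : (1:ℝ) ≤ Real.exp (2*r) := Real.one_le_exp (by linarith)
  have h2 : 0 < Real.exp (2*r) + 1 := by positivity
  unfold tnh
  rw [sub_nonneg, div_le_one h2]
  linarith

lemma tnh_pos {r : ℝ} (hr : 0 < r) : 0 < tnh r := by
  have h1 : (1:ℝ) < Real.exp (2*r) := by
    have := Real.add_one_lt_exp (x := 2*r) (by positivity)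
    linarith
  have h2 : 0 < Real.exp (2*r) + 1 := by positivity
  unfold tnh
  rw [sub_pos, div_lt_one h2]
  linarith

lemma tnh_mono : Monotone tnh := by
  intro a b hab
  have h2 : 0 < Real.exp (2*a) + 1 := by positivity
  have h3 : 0 < Real.exp (2*b) + 1 := by positivity
  have h : Real.exp (2*a) ≤ Real.exp (2*b) := Real.exp_le_exp.2 (by linarith)
  have : 2 / (Real.exp (2*b) + 1) ≤ 2 / (Real.exp (2*a) + 1) := by
    apply div_le_div_of_nonneg_left (by norm_num) h2 (by linarith)
  unfold tnh
  linarith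

lemma one_add_tnh (r : ℝ) : 1 + tnh r = 2 * Real.exp (2*r) / (Real.exp (2*r) + 1) := by
  have h2 := exp2_pos r
  unfold tnh; field_simp; ring

lemma one_sub_tnh (r : ℝ) : 1 - tnh r = 2 / (Real.exp (2*r) + 1) := by
  unfold tnh; ring

lemma arctanh_tnh (r : ℝ) : arctanh (tnh r) = r := by
  have h2 := exp2_pos r
  have he : 0 < Real.exp (2*r) := Real.exp_pos _
  unfold arctanh
  rw [one_add_tnh, one_sub_tnh]
  have : 2 * Real.exp (2*r) / (Real.exp (2*r) + 1) / (2 / (Real.exp (2*r) + 1))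
      = Real.exp (2*r) := by field_simp
  rw [this, Real.log_exp]
  ring

lemma tnh_tendsto : Tendsto tnh atTop (nhds 1) := by
  have h1 : Tendsto (fun r : ℝ => Real.exp (2*r) + 1) atTop atTop := by
    apply Tendsto.atTop_add _ tendsto_const_nhds
    exact (Real.tendsto_exp_atTop).comp (tendsto_atTop_atTop_of_monotone
      (fun a b hab => by linarith) (fun c => ⟨c/2, by linarith⟩))
  have h2 : Tendsto (fun r : ℝ => 2 / (Real.exp (2*r) + 1)) atTop (nhds 0) :=
    Tendsto.div_atTop tendsto_const_nhds h1
  have := (tendsto_const_nhds (x := (1:ℝ)) (f := atTop)).sub h2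
  exact (by simpa using this : Tendsto (fun x => 1 - 2 / (Real.exp (2 * x) + 1)) atTop (nhds 1))

-- monotonicity of arctanh, arctanh comparison
lemma tnh_le_of_le {ρ r : ℝ} (h0 : 0 ≤ ρ) (h1 : ρ < 1) (h : r ≤ arctanh ρ) : tnh r ≤ ρ := by
  by_contra hc
  push_neg at hc
  have h2 : arctanh ρ < arctanh (tnh r) := by
    unfold arctanh
    have hp1 : 0 < 1 - ρ := by linarith
    have hp2 : 0 < 1 - tnh r := by have := tnh_lt_one r; linarith
    have hpos : 0 < (1+ρ)/(1-ρ) := by positivity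
    have hlt : (1+ρ)/(1-ρ) < (1+tnh r)/(1-tnh r) := by
      rw [div_lt_div_iff₀ hp1 hp2]; nlinarith
    have := Real.log_lt_log hpos hlt
    linarith
  rw [arctanh_tnh] at h2
  linarith

lemma norm_key (a z : ℂ) :
    ‖1 - conj' a * z‖ ^ 2 - ‖a - z‖ ^ 2 = (1 - ‖a‖ ^ 2) * (1 - ‖z‖ ^ 2) := by
  have h1 : ∀ w : ℂ, ‖w‖ ^ 2 = Complex.normSq w := fun w => by
    rw [Complex.sq_norm]
  simp only [h1, Complex.normSq_apply, Complex.sub_re, Complex.sub_im, Complex.one_re,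
    Complex.one_im, Complex.mul_re, Complex.mul_im, Complex.conj_re, Complex.conj_im]
  ring

lemma norm_lt_denom {a z : ℂ} (ha : ‖a‖ < 1) (hz : ‖z‖ < 1) :
    ‖a - z‖ < ‖1 - conj' a * z‖ := by
  have hk := norm_key a z
  have hp : 0 < (1 - ‖a‖^2) * (1 - ‖z‖^2) :=
    mul_pos (by nlinarith [norm_nonneg a]) (by nlinarith [norm_nonneg z])
  have h0 : (0:ℝ) ≤ ‖a - z‖ := norm_nonneg _
  have h0' : (0:ℝ) ≤ ‖1 - conj' a * z‖ := norm_nonneg _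
  by_contra hc
  push_neg at hc
  nlinarith

lemma denom_ne_zero {a z : ℂ} (ha : ‖a‖ < 1) (hz : ‖z‖ < 1) :
    (1 - conj' a * z) ≠ 0 := by
  intro h
  have h2 := norm_lt_denom ha hz
  rw [h, norm_zero] at h2
  exact absurd h2 (not_lt.2 (norm_nonneg _))

/-- the Möbius map sending x to 0 -/
noncomputable def mob (x t : ℂ) : ℂ := (t - x) / (1 - conj' x * t)

lemma mob_norm_lt_one {x t : ℂ} (hx : ‖x‖ < 1) (ht : ‖t‖ < 1) : ‖mob x t‖ < 1 := by
  unfold mob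
  rw [norm_div]
  have h1 := norm_lt_denom hx ht
  have h2 : (0:ℝ) < ‖1 - conj' x * t‖ := by
    have := norm_nonneg (x - t)
    calc (0:ℝ) ≤ ‖x - t‖ := norm_nonneg _
    _ < _ := norm_lt_denom hx ht
  rw [div_lt_one h2]
  calc ‖t - x‖ = ‖x - t‖ := by rw [← norm_neg]; ring_nf
  _ < _ := h1

lemma one_sub_mob_sq {x t : ℂ} (hx : ‖x‖ < 1) (ht : ‖t‖ < 1) :
    1 - ‖mob x t‖^2 = (1 - ‖x‖^2) * (1 - ‖t‖^2) / ‖1 - conj' x * t‖^2 := by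
  have hk := norm_key x t
  have hd : (0:ℝ) < ‖1 - conj' x * t‖ := by
    calc (0:ℝ) ≤ ‖x - t‖ := norm_nonneg _
    _ < _ := norm_lt_denom hx ht
  unfold mob
  have hts : ‖t - x‖ = ‖x - t‖ := by rw [← norm_neg]; ring_nf
  rw [norm_div, div_pow, hts]
  have e : 1 - ‖x - t‖^2/‖1 - conj' x * t‖^2
      = (‖1 - conj' x * t‖^2 - ‖x - t‖^2)/‖1 - conj' x * t‖^2 := by
    rw [sub_div, div_self (pow_ne_zero 2 hd.ne')]
  rw [e, hk]
lemma conj_mul_self (x : ℂ) : conj' x * x = ((‖x‖^2 : ℝ) : ℂ) := by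
  rw [mul_comm, Complex.mul_conj, Complex.normSq_eq_norm_sq]

lemma norm_one_sub_conj_self {x : ℂ} (hx : ‖x‖ < 1) : ‖1 - conj' x * x‖ = 1 - ‖x‖^2 := by
  rw [conj_mul_self]
  have h : (1 : ℂ) - ((‖x‖^2 : ℝ) : ℂ) = (((1 - ‖x‖^2 : ℝ)) : ℂ) := by push_cast; ring
  rw [h, Complex.norm_real, Real.norm_of_nonneg (by nlinarith [norm_nonneg x])]


lemma mob_sub (x t s : ℂ) (h1 : (1 - conj' x * t) ≠ 0) (h2 : (1 - conj' x * s) ≠ 0) :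
    mob x t - mob x s = (t - s) * (1 - conj' x * x) / ((1 - conj' x * t) * (1 - conj' x * s)) := by
  unfold mob; rw [div_sub_div _ _ h1 h2]; congr 1; ring

lemma conj_denom (x s : ℂ) : conj' (1 - conj' x * s) = 1 - x * conj' s := by
  rw [map_sub, map_one, map_mul, Complex.conj_conj]

lemma mob_one_sub (x t s : ℂ) (h1 : (1 - conj' x * t) ≠ 0) (h2 : (1 - x * conj' s) ≠ 0) :
    1 - conj' (mob x s) * mob x t
      = (1 - conj' s * t) * (1 - conj' x * x) / ((1 - x * conj' s) * (1 - conj' x * t)) := by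
  unfold mob
  simp only [map_div₀, map_sub, map_mul, map_one, Complex.conj_conj]
  rw [div_mul_div_comm, one_sub_div (mul_ne_zero h2 h1)]; congr 1; ring
lemma ball_vol_toReal (v : ℂ) (ρ : ℝ) (hρ : 0 ≤ ρ) :
    (volume (Metric.ball v ρ)).toReal = ρ^2 * Real.pi := by
  rw [Complex.volume_ball, ENNReal.toReal_mul, ← ENNReal.ofReal_pow hρ,
    ENNReal.toReal_ofReal (by positivity), ENNReal.coe_toReal, NNReal.coe_real_pi]

lemma ball_vol_ne_top (v : ℂ) (ρ : ℝ) : volume (Metric.ball v ρ) ≠ ⊤ := by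
  rw [Complex.volume_ball]
  exact ENNReal.mul_ne_top (by simp [ENNReal.pow_ne_top, ENNReal.ofReal_ne_top]) ENNReal.coe_ne_top

lemma closedBall_vol_ne_top (v : ℂ) (ρ : ℝ) : volume (Metric.closedBall v ρ) ≠ ⊤ := by
  rw [Complex.volume_closedBall]
  exact ENNReal.mul_ne_top (by simp [ENNReal.pow_ne_top, ENNReal.ofReal_ne_top]) ENNReal.coe_ne_top

lemma packing (F : Finset ℂ) (δ b : ℝ) (hδ0 : 0 < δ) (hδ1 : δ ≤ 1/2) (hb0 : 0 ≤ b) (hb1 : b < 1)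
    (hmem : ∀ v ∈ F, ‖v‖ < 1)
    (hsep : ∀ v ∈ F, ∀ v' ∈ F, v ≠ v' → δ*(1-‖v‖) + δ*(1-‖v'‖) ≤ ‖v - v'‖)
    (hlow : ∀ v ∈ F, b + δ*(1-‖v‖) ≤ ‖v‖) :
    ∑ v ∈ F, (1-‖v‖)^2 ≤ (1 - b^2)/δ^2 := by
  set A : Set ℂ := Metric.ball (0:ℂ) 1 \ Metric.closedBall (0:ℂ) b with hA
  have hsub : ∀ v ∈ F, Metric.ball v (δ*(1-‖v‖)) ⊆ A := by
    intro v hv z hz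
    rw [Metric.mem_ball, dist_eq_norm] at hz
    have h1 := hmem v hv
    have h2 := hlow v hv
    have htr : ‖z‖ ≤ ‖v‖ + ‖z - v‖ := norm_le_norm_add_norm_sub' z v
    have htr2 : ‖v‖ - ‖z‖ ≤ ‖z - v‖ := by
      have := norm_sub_norm_le v z
      calc ‖v‖ - ‖z‖ ≤ ‖v - z‖ := this
      _ = ‖z - v‖ := norm_sub_rev v z
    constructor
    · rw [Metric.mem_ball, dist_zero_right]
      nlinarith
    · intro hz2
      rw [Metric.mem_closedBall, dist_zero_right] at hz2
      nlinarith
  have hdisj : (↑F : Set ℂ).PairwiseDisjoint (fun v => Metric.ball v (δ*(1-‖v‖))) := by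
    intro v hv v' hv' hne
    apply Metric.ball_disjoint_ball
    rw [dist_eq_norm]
    exact hsep v (by simpa using hv) v' (by simpa using hv') hne
  have hmeas := measure_biUnion_finset (μ := volume) hdisj (fun v _ => measurableSet_ball)
  have hUA : volume (⋃ v ∈ F, Metric.ball v (δ*(1-‖v‖))) ≤ volume A := by
    apply measure_mono
    simp only [Set.iUnion_subset_iff]
    intro v hv
    exact hsub v hv
  have hAne : volume A ≠ ⊤ := by
    apply ne_top_of_le_ne_top (ball_vol_ne_top 0 1)
    exact measure_mono Set.diff_subset
  have hAvol : (volume A).toReal = (1 - b^2) * Real.pi := by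
    rw [hA, measure_diff (Metric.closedBall_subset_ball hb1)
      measurableSet_closedBall.nullMeasurableSet (closedBall_vol_ne_top 0 b)]
    rw [ENNReal.toReal_sub_of_le (measure_mono (Metric.closedBall_subset_ball hb1))
      (ball_vol_ne_top 0 1)]
    rw [ball_vol_toReal 0 1 zero_le_one]
    rw [Complex.volume_closedBall, ENNReal.toReal_mul, ← ENNReal.ofReal_pow hb0,
      ENNReal.toReal_ofReal (by positivity), ENNReal.coe_toReal, NNReal.coe_real_pi]
    ring
  have key : ∑ v ∈ F, (δ*(1-‖v‖))^2 * Real.pi ≤ (1 - b^2) * Real.pi := by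
    have hnn : ∀ v ∈ F, (0:ℝ) ≤ δ*(1-‖v‖) := by
      intro v hv
      have := hmem v hv
      nlinarith
    calc ∑ v ∈ F, (δ*(1-‖v‖))^2 * Real.pi
        = ∑ v ∈ F, (volume (Metric.ball v (δ*(1-‖v‖)))).toReal := by
          apply Finset.sum_congr rfl
          intro v hv
          rw [ball_vol_toReal v _ (hnn v hv)]
      _ = (∑ v ∈ F, volume (Metric.ball v (δ*(1-‖v‖)))).toReal := by
          rw [ENNReal.toReal_sum (fun v _ => ball_vol_ne_top v _)]
      _ = (volume (⋃ v ∈ F, Metric.ball v (δ*(1-‖v‖)))).toReal := by rw [hmeas]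
      _ ≤ (volume A).toReal := ENNReal.toReal_mono hAne hUA
      _ = (1 - b^2) * Real.pi := hAvol
  have hπ := Real.pi_pos
  rw [le_div_iff₀ (by positivity)]
  have expand : ∑ v ∈ F, (δ*(1-‖v‖))^2 * Real.pi = (∑ v ∈ F, (1-‖v‖)^2) * δ^2 * Real.pi := by
    rw [Finset.sum_mul, Finset.sum_mul]
    apply Finset.sum_congr rfl
    intro v _
    ring
  rw [expand] at key
  nlinarith [Finset.sum_nonneg (fun v (hv : v ∈ F) => sq_nonneg (1-‖v‖))]

lemma norm_denom_comm (t s : ℂ) : ‖1 - conj' t * s‖ = ‖1 - conj' s * t‖ := by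
  rw [← RCLike.norm_conj (1 - conj' t * s), conj_denom, mul_comm]

lemma mob_dist {x t s : ℂ} (hx : ‖x‖ < 1) (ht : ‖t‖ < 1) (hs : ‖s‖ < 1) :
    ‖mob x t - mob x s‖
      = ‖t - s‖ / ‖1 - conj' s * t‖ * ‖1 - conj' (mob x s) * mob x t‖ := by
  have d1 := denom_ne_zero hx ht
  have d2 := denom_ne_zero hx hs
  have d3 := denom_ne_zero hs ht
  have d2' : (1 - x * conj' s) ≠ 0 := by
    rw [← conj_denom]
    intro h
    apply d2
    have h2 := congrArg conj' h
    simpa [Complex.conj_conj] using h2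
  rw [mob_sub x t s d1 d2, mob_one_sub x t s d1 d2']
  simp only [norm_div, norm_mul]
  have hc : ‖1 - x * conj' s‖ = ‖1 - conj' x * s‖ := by
    rw [← conj_denom, RCLike.norm_conj]
  rw [hc, norm_one_sub_conj_self hx]
  have p1 : (0:ℝ) < ‖1 - conj' x * t‖ := norm_pos_iff.2 d1
  have p2 : (0:ℝ) < ‖1 - conj' x * s‖ := norm_pos_iff.2 d2
  have p3 : (0:ℝ) < ‖1 - conj' s * t‖ := norm_pos_iff.2 d3
  generalize ‖t - s‖ = A at *
  generalize ‖1 - conj' s * t‖ = B at *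
  generalize ‖1 - conj' x * t‖ = N1 at *
  generalize ‖1 - conj' x * s‖ = N2 at *
  field_simp

noncomputable def del (r : ℝ) : ℝ := tnh (min r 1) / 2
noncomputable def bb (r : ℝ) : ℝ := max (tnh r - del r * (1 - tnh r)) 0
noncomputable def DrF (r : ℝ) : ℝ := 4 * (1 - bb r ^ 2) / del r ^ 2

lemma core {r : ℝ} (hr : 0 < r) {T : Set ℂ} (hT : T ⊆ Metric.ball 0 1) (hS : IsSeparated r T)
    {c : ℂ → ℂ} {M : ℝ} (hM : ∀ t ∈ T, ‖c t‖ * (1-‖t‖^2)^2 ≤ M) {x : ℂ} (hx : x ∈ T)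
    (F : Finset ℂ) (hF : ↑F ⊆ T) (hxF : x ∉ F) :
    (∑ t ∈ F, ‖minExt t (c t) x‖) * (1-‖x‖^2)^2 ≤ DrF r * M := by
  have hx1 : ‖x‖ < 1 := by
    have := hT hx; rwa [mem_ball_zero_iff] at this
  have ht1 : ∀ t ∈ F, ‖t‖ < 1 := by
    intro t ht
    have := hT (hF ht); rwa [mem_ball_zero_iff] at this
  have M0 : (0:ℝ) ≤ M := le_trans (by positivity) (hM x hx)
  set a := tnh r with ha
  set δ := del r with hδ
  have hδ0 : 0 < δ := by
    rw [hδ]; unfold del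
    have : 0 < tnh (min r 1) := tnh_pos (by positivity)
    linarith
  have hδh : δ ≤ 1/2 := by
    rw [hδ]; unfold del
    have := tnh_lt_one (min r 1); linarith
  have h2δ : 2*δ ≤ a := by
    rw [hδ, ha]; unfold del
    have := tnh_mono (min_le_left r 1); linarith
  have ha1 : a < 1 := tnh_lt_one r
  have ha0 : 0 < a := tnh_pos hr
  -- norm of mob image of any t ∈ F is ≥ a
  have himlow : ∀ t ∈ F, a ≤ ‖mob x t‖ := by
    intro t ht
    have htx : t ≠ x := fun h => hxF (h ▸ ht)
    have hd := hS t (hF ht) x hx htx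
    unfold hdist at hd
    have hnorm : ‖(t - x) / (1 - conj' t * x)‖ = ‖mob x t‖ := by
      unfold mob
      rw [norm_div, norm_div, norm_denom_comm]
    rw [hnorm] at hd
    exact tnh_le_of_le (norm_nonneg _) (mob_norm_lt_one hx1 (ht1 t ht)) hd
  -- injectivity of mob x on F
  have hinj : ∀ t ∈ F, ∀ s ∈ F, mob x t = mob x s → t = s := by
    intro t ht s hs h
    have d1 := denom_ne_zero hx1 (ht1 t ht)
    have d2 := denom_ne_zero hx1 (ht1 s hs)
    have hK : (1 - conj' x * x) ≠ 0 := by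
      intro h0
      have := norm_one_sub_conj_self hx1
      rw [h0, norm_zero] at this
      nlinarith [norm_nonneg x]
    have := mob_sub x t s d1 d2
    rw [h, sub_self] at this
    rcases (div_eq_zero_iff.1 this.symm) with h3 | h3
    · rcases mul_eq_zero.1 h3 with h4 | h4
      · exact sub_eq_zero.1 h4
      · exact absurd h4 hK
    · exact absurd h3 (mul_ne_zero d1 d2)
  -- termwise bound
  have hterm : ∀ t ∈ F, ‖minExt t (c t) x‖ * (1-‖x‖^2)^2 ≤ M * (1 - ‖mob x t‖^2)^2 := by
    intro t ht
    have ht' := ht1 t ht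
    have hd : (1 - conj' t * x) ≠ 0 := denom_ne_zero ht' hx1
    have hE : (0:ℝ) < ‖1 - conj' x * t‖ := norm_pos_iff.2 (denom_ne_zero hx1 ht')
    have hnorm : ‖minExt t (c t) x‖ = ‖c t‖ * (1-‖t‖^2)^4 / ‖1 - conj' x * t‖^4 := by
      unfold minExt
      rw [norm_div, norm_mul, norm_pow, norm_pow, Complex.norm_real,
        Real.norm_of_nonneg (by nlinarith [norm_nonneg t]), ← norm_denom_comm]
    rw [hnorm, one_sub_mob_sq hx1 ht']
    have hMt := hM t (hF ht)
    have e1 : ‖c t‖ * (1-‖t‖^2)^4 / ‖1 - conj' x * t‖^4 * (1-‖x‖^2)^2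
        = (‖c t‖ * (1-‖t‖^2)^2) * ((1-‖t‖^2)^2 * (1-‖x‖^2)^2 / ‖1 - conj' x * t‖^4) := by
      field_simp
    have e2 : M * ((1-‖x‖^2) * (1-‖t‖^2) / ‖1 - conj' x * t‖^2)^2
        = M * ((1-‖t‖^2)^2 * (1-‖x‖^2)^2 / ‖1 - conj' x * t‖^4) := by
      field_simp
    rw [e1, e2]
    apply mul_le_mul_of_nonneg_right hMt (by positivity)
  -- the image of F under mob x
  set G := F.image (mob x) with hG
  have hsum_eq : ∑ t ∈ F, (1 - ‖mob x t‖^2)^2 = ∑ v ∈ G, (1 - ‖v‖^2)^2 := by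
    rw [hG, Finset.sum_image hinj]
  -- packing hypotheses
  have hGmem : ∀ v ∈ G, ‖v‖ < 1 := by
    intro v hv
    rw [hG, Finset.mem_image] at hv
    obtain ⟨t, ht, rfl⟩ := hv
    exact mob_norm_lt_one hx1 (ht1 t ht)
  have hGlow0 : ∀ v ∈ G, a ≤ ‖v‖ := by
    intro v hv
    rw [hG, Finset.mem_image] at hv
    obtain ⟨t, ht, rfl⟩ := hv
    exact himlow t ht
  have hGsep : ∀ v ∈ G, ∀ v' ∈ G, v ≠ v' → δ*(1-‖v‖) + δ*(1-‖v'‖) ≤ ‖v - v'‖ := by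
    intro v hv v' hv' hne
    rw [hG, Finset.mem_image] at hv hv'
    obtain ⟨t, ht, rfl⟩ := hv
    obtain ⟨s, hs, rfl⟩ := hv'
    have hts : t ≠ s := fun h => hne (by rw [h])
    have hdts := hS t (hF ht) s (hF hs) hts
    unfold hdist at hdts
    have hρeq : ‖(t - s) / (1 - conj' t * s)‖ = ‖t - s‖ / ‖1 - conj' s * t‖ := by
      rw [norm_div, norm_denom_comm]
    rw [hρeq] at hdts
    have hρlt : ‖t - s‖ / ‖1 - conj' s * t‖ < 1 := by
      have := mob_norm_lt_one (ht1 s hs) (ht1 t ht)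
      unfold mob at this
      rwa [norm_div] at this
    have hρ : a ≤ ‖t - s‖ / ‖1 - conj' s * t‖ :=
      tnh_le_of_le (by positivity) hρlt hdts
    have hdist_eq := mob_dist hx1 (ht1 t ht) (ht1 s hs)
    have hlb : 1 - ‖mob x t‖ * ‖mob x s‖ ≤ ‖1 - conj' (mob x s) * mob x t‖ := by
      have := norm_sub_norm_le (1:ℂ) (conj' (mob x s) * mob x t)
      rw [norm_one, norm_mul, RCLike.norm_conj] at this
      linarith [this]
    have hvt := mob_norm_lt_one hx1 (ht1 t ht)
    have hvs := mob_norm_lt_one hx1 (ht1 s hs)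
    have hnt := norm_nonneg (mob x t)
    have hns := norm_nonneg (mob x s)
    have hprod : (0:ℝ) ≤ 1 - ‖mob x t‖ * ‖mob x s‖ := by nlinarith
    calc δ*(1-‖mob x t‖) + δ*(1-‖mob x s‖)
        ≤ a * (1 - ‖mob x t‖ * ‖mob x s‖) := by
          nlinarith [mul_nonneg hδ0.le (mul_nonneg hnt (sub_nonneg.2 hvs.le)),
            mul_nonneg hδ0.le (mul_nonneg hns (sub_nonneg.2 hvt.le)),
            mul_nonneg (by linarith : (0:ℝ) ≤ a - 2*δ) hprod]
      _ ≤ (‖t - s‖ / ‖1 - conj' s * t‖) * ‖1 - conj' (mob x s) * mob x t‖ := by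
          apply mul_le_mul hρ hlb hprod (by positivity)
      _ = ‖mob x t - mob x s‖ := hdist_eq.symm
  have hGlow : ∀ v ∈ G, bb r + δ*(1-‖v‖) ≤ ‖v‖ := by
    intro v hv
    have h1 := hGlow0 v hv
    have h2 := hGmem v hv
    have h3 := norm_nonneg v
    unfold bb
    rw [← hδ, ← ha]
    have hml : (a - δ * (1 - a)) ⊔ 0 ≤ ‖v‖ - δ * (1 - ‖v‖) := by
      apply max_le
      · nlinarith
      · nlinarith [mul_nonneg hδ0.le h3]
    linarith
  have hbb0 : 0 ≤ bb r := le_max_right _ _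
  have hbb1 : bb r < 1 := by
    unfold bb
    rw [← hδ, ← ha]
    apply max_lt _ one_pos
    nlinarith
  have hpack := packing G δ (bb r) hδ0 hδh hbb0 hbb1 hGmem hGsep hGlow
  have h4 : ∀ v ∈ G, (1-‖v‖^2)^2 ≤ 4*(1-‖v‖)^2 := by
    intro v hv
    have hn1 : ‖v‖ ≤ 1 := (hGmem v hv).le
    nlinarith [pow_nonneg (sub_nonneg.2 hn1) 3, norm_nonneg v,
      mul_nonneg (pow_nonneg (sub_nonneg.2 hn1) 3) (norm_nonneg v)]
  calc (∑ t ∈ F, ‖minExt t (c t) x‖) * (1-‖x‖^2)^2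
      = ∑ t ∈ F, ‖minExt t (c t) x‖ * (1-‖x‖^2)^2 := by rw [Finset.sum_mul]
    _ ≤ ∑ t ∈ F, M * (1 - ‖mob x t‖^2)^2 := Finset.sum_le_sum hterm
    _ = M * ∑ v ∈ G, (1 - ‖v‖^2)^2 := by rw [← Finset.mul_sum, hsum_eq]
    _ ≤ M * ∑ v ∈ G, 4*(1-‖v‖)^2 :=
        mul_le_mul_of_nonneg_left (Finset.sum_le_sum h4) M0
    _ = M * (4 * ∑ v ∈ G, (1-‖v‖)^2) := by rw [← Finset.mul_sum]
    _ ≤ M * (4 * ((1 - bb r^2)/δ^2)) :=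
        mul_le_mul_of_nonneg_left (mul_le_mul_of_nonneg_left hpack (by norm_num)) M0
    _ = DrF r * M := by unfold DrF; rw [← hδ]; ring

lemma DrF_pos : ∀ r > (0:ℝ), 0 < DrF r := by
  intro r hr
  have hδ0 : 0 < del r := by
    unfold del
    have : 0 < tnh (min r 1) := tnh_pos (by positivity)
    linarith
  have hbb0 : 0 ≤ bb r := le_max_right _ _
  have hbb1 : bb r < 1 := by
    unfold bb
    apply max_lt _ one_pos
    have h1 := tnh_lt_one r
    have h2 : 0 ≤ 1 - tnh r := by linarith
    nlinarith
  unfold DrF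
  apply div_pos _ (by positivity)
  nlinarith

lemma DrF_tendsto : Tendsto DrF atTop (nhds 0) := by
  set δ₀ : ℝ := tnh 1 / 2 with hδ₀
  have hδ₀pos : 0 < δ₀ := by
    have := tnh_pos one_pos; rw [hδ₀]; linarith
  set g : ℝ → ℝ := fun u => 4 * (1 - (max (u - δ₀*(1-u)) 0)^2) / δ₀^2 with hg
  have hgc : Continuous g := by
    apply Continuous.div_const
    apply Continuous.mul continuous_const
    apply Continuous.sub continuous_const
    apply Continuous.pow
    exact Continuous.max (by continuity) continuous_const
  have hg1 : g 1 = 0 := by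
    rw [hg]
    simp
  have h1 : Tendsto (fun r => g (tnh r)) atTop (nhds 0) := by
    rw [← hg1]
    exact hgc.continuousAt.tendsto.comp tnh_tendsto
  apply h1.congr'
  filter_upwards [eventually_ge_atTop (1:ℝ)] with r hr
  unfold DrF bb del
  rw [min_eq_right hr, hg]


/-- There is a function `Dr : (0,∞) → (0,∞)` with
`Dr r → 0` as `r → ∞` such that: for every `r > 0`, every `r`-separated
`T ⊆ D` and weights `c : T → ℂ` with `M := sup_{t∈T} |c t|(1−|t|²)² < ∞`, the
Fuchsian series `σ z = Σ_{t∈T} c t·(1−|t|²)⁴/(1−conj(t)·z)⁴` satisfies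
`|σ x − c x|·(1−|x|²)² ≤ Dr r · M` for every `x ∈ T`. -/
theorem fuchsian_series_approximates_weights :
    ∃ Dr : ℝ → ℝ, (∀ r > (0 : ℝ), 0 < Dr r) ∧
      Tendsto Dr atTop (nhds 0) ∧
      ∀ r > (0 : ℝ), ∀ T : Set ℂ, T ⊆ ball (0 : ℂ) 1 → IsSeparated r T →
        ∀ c : ℂ → ℂ, ∀ M : ℝ, (∀ t ∈ T, ‖c t‖ * (1 - ‖t‖ ^ 2) ^ 2 ≤ M) →
          ∀ x ∈ T,
            Summable (fun t : T => minExt (t : ℂ) (c (t : ℂ)) x) ∧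
            ‖(∑' t : T, minExt (t : ℂ) (c (t : ℂ)) x) - c x‖ * (1 - ‖x‖ ^ 2) ^ 2
              ≤ Dr r * M := by
  classical
  refine ⟨DrF, DrF_pos, DrF_tendsto, ?_⟩
  intro r hr T hT hS c M hM x hx
  have hx1 : ‖x‖ < 1 := by
    have := hT hx; rwa [mem_ball_zero_iff] at this
  have hP : (0:ℝ) < (1-‖x‖^2)^2 := by
    have h0 : (0:ℝ) < 1 - ‖x‖^2 := by nlinarith [norm_nonneg x]
    positivity
  set f : T → ℂ := fun t => minExt (t:ℂ) (c (t:ℂ)) x with hf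
  set h : T → ℝ := fun t => if (t:ℂ) = x then 0 else ‖f t‖ with hh
  have key : ∀ u : Finset T, ∑ t ∈ u, h t ≤ DrF r * M / (1-‖x‖^2)^2 := by
    intro u
    set F : Finset ℂ :=
      Finset.image (fun t : T => (t : ℂ)) (Finset.filter (fun t : T => ¬((t : ℂ) = x)) u) with hF
    have hFs : ↑F ⊆ T := by
      intro z hz
      rw [hF] at hz
      simp only [Finset.coe_image, Set.mem_image, Finset.mem_coe, Finset.mem_filter] at hz
      obtain ⟨t, _, rfl⟩ := hz
      exact t.2
    have hxF : x ∉ F := by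
      rw [hF]
      simp only [Finset.mem_image, Finset.mem_filter]
      rintro ⟨t, ⟨_, hne⟩, heq⟩
      exact hne heq
    have hsum : ∑ t ∈ u, h t = ∑ z ∈ F, ‖minExt z (c z) x‖ := by
      rw [hF, Finset.sum_image (fun a _ b _ hab => Subtype.ext hab)]
      rw [Finset.sum_filter]
      apply Finset.sum_congr rfl
      intro t _
      by_cases hc : (t:ℂ) = x <;> simp [hh, hf, hc]
    rw [hsum, le_div_iff₀ hP]
    exact core hr hT hS hM hx F hFs hxF
  have h_nonneg : (0:T → ℝ) ≤ h := by
    intro t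
    rw [hh]
    dsimp
    split
    · exact le_refl 0
    · positivity
  have hsummable_h : Summable h := summable_of_sum_le h_nonneg key
  have hsummable_ind : Summable (fun t : T => if (t:ℂ) = x then ‖f t‖ else 0) := by
    apply summable_of_ne_finset_zero (s := {(⟨x, hx⟩ : T)})
    intro t ht
    simp only [Finset.mem_singleton] at ht
    rw [if_neg (fun hc => ht (Subtype.ext hc))]
  have hsummable_norm : Summable (fun t : T => ‖f t‖) := by
    have : (fun t : T => ‖f t‖)
        = fun t => h t + (if (t:ℂ) = x then ‖f t‖ else 0) := by
      funext t
      by_cases hc : (t:ℂ) = x <;> simp [hh, hc]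
    rw [this]
    exact hsummable_h.add hsummable_ind
  have hsummable_f : Summable f := hsummable_norm.of_norm
  refine ⟨hsummable_f, ?_⟩
  have hxval : f ⟨x, hx⟩ = c x := by
    rw [hf]
    dsimp
    unfold minExt
    rw [conj_mul_self x,
      show (1:ℂ) - ((‖x‖^2:ℝ):ℂ) = (((1 - ‖x‖^2:ℝ)):ℂ) by push_cast; ring]
    rw [mul_div_assoc, div_self, mul_one]
    apply pow_ne_zero
    rw [Ne, Complex.ofReal_eq_zero]
    nlinarith
  have htsum := Summable.tsum_eq_add_tsum_ite hsummable_f (⟨x, hx⟩ : T)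
  rw [show (∑' t : T, minExt (t:ℂ) (c (t:ℂ)) x) = ∑' t, f t from rfl, htsum, hxval,
    add_sub_cancel_left]
  have hg_eq : ∀ t : T, ‖(if t = (⟨x,hx⟩:T) then (0:ℂ) else f t)‖ = h t := by
    intro t
    by_cases hc : t = ⟨x,hx⟩
    · rw [if_pos hc, hh]
      dsimp
      rw [if_pos (by rw [hc] : (t:ℂ) = x)]
      simp
    · rw [if_neg hc, hh]
      dsimp
      rw [if_neg (fun hcc => hc (Subtype.ext hcc))]
  have hsummable_ite : Summable (fun t : T => ‖(if t = (⟨x,hx⟩:T) then (0:ℂ) else f t)‖) := by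
    apply hsummable_h.congr
    intro t
    exact (hg_eq t).symm
  have hnorm_le : ‖∑' t : T, (if t = (⟨x,hx⟩:T) then (0:ℂ) else f t)‖ ≤ ∑' t, h t := by
    calc ‖∑' t : T, (if t = (⟨x,hx⟩:T) then (0:ℂ) else f t)‖
        ≤ ∑' t : T, ‖(if t = (⟨x,hx⟩:T) then (0:ℂ) else f t)‖ :=
          norm_tsum_le_tsum_norm hsummable_ite
      _ = ∑' t, h t := tsum_congr hg_eq
  have htsum_h : ∑' t, h t ≤ DrF r * M / (1-‖x‖^2)^2 := Summable.tsum_le_of_sum_le hsummable_h key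
  calc ‖∑' t : T, (if t = (⟨x,hx⟩:T) then (0:ℂ) else f t)‖ * (1-‖x‖^2)^2
      ≤ (DrF r * M / (1-‖x‖^2)^2) * (1-‖x‖^2)^2 :=
        mul_le_mul_of_nonneg_right (hnorm_le.trans htsum_h) hP.le
    _ = DrF r * M := div_mul_cancel₀ _ hP.ne'
end

section
/- There exists a decreasing function A : (0,∞) → (0,∞) with the following property: for every r > 0, every ρ ≥ r, every r-separated subset T ⊆ D, and every x ∈ D with d(x,t) ≥ ρ for all t ∈ T, one has Σ_{t∈T} (1−|t|²)²·(1−|x|²)²/|1−conj(t)·x|⁴ ≤ π·A(r/2)·(1 − tanh²(ρ − r/2)). -/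
open Metric MeasureTheory

local notation "conj'" => starRingEnd ℂ

lemma tanh_exp (s : ℝ) : Real.tanh s = (Real.exp (2*s) - 1) / (Real.exp (2*s) + 1) := by
  have h : Real.exp (2*s) = Real.exp s * Real.exp s := by rw [two_mul, Real.exp_add]
  have h3 : 0 < Real.cosh s := Real.cosh_pos s
  rw [Real.tanh_eq_sinh_div_cosh, Real.sinh_eq, Real.cosh_eq, h]
  rw [div_eq_div_iff (by positivity) (by positivity)]
  have h2 : Real.exp s * Real.exp (-s) = 1 := by rw [← Real.exp_add]; simp
  nlinarith [Real.exp_pos s, Real.exp_pos (-s)]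


lemma tanh_lt_one (s : ℝ) : Real.tanh s < 1 := by
  rw [tanh_exp]
  have := Real.exp_pos (2*s)
  rw [div_lt_one (by linarith)]; linarith


lemma tanh_nonneg {s : ℝ} (hs : 0 ≤ s) : 0 ≤ Real.tanh s := by
  rw [tanh_exp]
  have h : (1:ℝ) ≤ Real.exp (2*s) := by
    rw [← Real.exp_zero]; exact Real.exp_le_exp.2 (by linarith)
  have := Real.exp_pos (2*s)
  apply div_nonneg <;> linarith


lemma tanh_pos {s : ℝ} (hs : 0 < s) : 0 < Real.tanh s := by
  rw [tanh_exp]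
  have h : (1:ℝ) < Real.exp (2*s) := by
    rw [← Real.exp_zero]; exact Real.exp_lt_exp.2 (by linarith)
  have := Real.exp_pos (2*s)
  apply div_pos <;> linarith


lemma tanh_mono {s s' : ℝ} (h : s ≤ s') : Real.tanh s ≤ Real.tanh s' := by
  rw [tanh_exp, tanh_exp]
  have h1 := Real.exp_pos (2*s)
  have h2 := Real.exp_pos (2*s')
  have h3 : Real.exp (2*s) ≤ Real.exp (2*s') := Real.exp_le_exp.2 (by linarith)
  rw [div_le_div_iff₀ (by linarith) (by linarith)]
  nlinarith


lemma tanh_le_of_le_arctanh {u s : ℝ} (hu0 : 0 ≤ u) (hu1 : u < 1) (h : s ≤ arctanh u) :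
    Real.tanh s ≤ u := by
  have hy : Real.exp (2*s) ≤ (1+u)/(1-u) := by
    have hpos : (0:ℝ) < (1+u)/(1-u) := by
      apply div_pos <;> linarith
    have : 2*s ≤ Real.log ((1+u)/(1-u)) := by
      unfold arctanh at h; linarith
    exact (Real.le_log_iff_exp_le hpos).1 this
  rw [tanh_exp]
  have h1 := Real.exp_pos (2*s)
  rw [div_le_iff₀ (by linarith)]
  rw [le_div_iff₀ (by linarith)] at hy
  nlinarith


lemma mono_frac {u v w : ℝ} (hu0 : 0 ≤ u) (hu1 : u < 1) (hv0 : 0 ≤ v) (hvw : v ≤ w)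
    (hw0 : 0 ≤ w) :
    (u + v) / (1 + u * v) ≤ (u + w) / (1 + u * w) := by
  have huv : (0:ℝ) < 1 + u*v := by nlinarith
  have huw : (0:ℝ) < 1 + u*w := by nlinarith
  rw [div_le_div_iff₀ huv huw]
  nlinarith [mul_nonneg (sub_nonneg.2 hvw) (by nlinarith : (0:ℝ) ≤ 1 - u*u)]

-- pure algebra core


lemma key_core {u v b c : ℝ} (hb1 : 1 < b) (hcb : b^2 ≤ c) (hu0 : 0 ≤ u) (hu1 : u < 1)
    (hv0 : 0 ≤ v) (hv : v ≤ (b^2 - 1)/(b^2+1)/3)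
    (htri : (c-1)/(c+1) ≤ (u + v) / (1 + u * v)) :
    (c - b)/(c + b) ≤ u := by
  have hbp : (0:ℝ) < b + 1 := by linarith
  have hc1 : 1 < c := by nlinarith
  have hw : v ≤ (b-1)/(b+1) := by
    have h3 : (b^2-1)/(b^2+1)/3 ≤ (b-1)/(b+1) := by
      rw [div_div, div_le_div_iff₀ (by positivity) hbp]
      nlinarith [mul_nonneg (by linarith : (0:ℝ) ≤ b - 1) (sq_nonneg (b-1))]
    linarith
  have hw0 : (0:ℝ) ≤ (b-1)/(b+1) := by apply div_nonneg <;> linarith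
  have hwb : (b-1)/(b+1) * (b+1) = b - 1 := by field_simp
  have hkey : (c-1)/(c+1) ≤ (u + (b-1)/(b+1))/(1 + u*((b-1)/(b+1))) :=
    le_trans htri (mono_frac hu0 hu1 hv0 hw hw0)
  have huw : (0:ℝ) < 1 + u*((b-1)/(b+1)) := by nlinarith
  rw [div_le_div_iff₀ (by linarith) huw] at hkey
  have hstep : (c-1) - u*(c+1) ≤ ((b-1)/(b+1))*((c+1) - u*(c-1)) := by nlinarith [hkey]
  have hcoef : (0:ℝ) ≤ (c+1) - u*(c-1) := by nlinarith
  have hstep2 : ((c-1) - u*(c+1))*(b+1) ≤ (b-1)*((c+1) - u*(c-1)) := by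
    have g1 := mul_le_mul_of_nonneg_right hstep (le_of_lt hbp)
    nlinarith [g1, hwb, hcoef]
  rw [div_le_iff₀ (by linarith)]
  nlinarith [hstep2]


lemma key_arith {u v r ρ : ℝ} (hr : 0 < r) (hρ : r ≤ ρ) (hu0 : 0 ≤ u) (hu1 : u < 1)
    (hv0 : 0 ≤ v) (hv : v ≤ Real.tanh r / 3)
    (htri : Real.tanh ρ ≤ (u + v) / (1 + u * v)) :
    Real.tanh (ρ - r/2) ≤ u := by
  have hb1 : 1 < Real.exp r := by
    rw [← Real.exp_zero]; exact Real.exp_lt_exp.2 hr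
  have hb0 : 0 < Real.exp r := Real.exp_pos r
  have hsq : Real.exp r ^ 2 = Real.exp (2*r) := by rw [sq, ← Real.exp_add]; ring_nf
  have hcb : Real.exp r ^ 2 ≤ Real.exp (2*ρ) := by
    rw [hsq]; exact Real.exp_le_exp.2 (by linarith)
  have htρr : Real.tanh (ρ - r/2) =
      (Real.exp (2*ρ) - Real.exp r)/(Real.exp (2*ρ) + Real.exp r) := by
    rw [tanh_exp]
    have hE : Real.exp (2*(ρ - r/2)) = Real.exp (2*ρ) / Real.exp r := by
      rw [← Real.exp_sub]; ring_nf
    rw [hE, div_eq_div_iff (by positivity) (by positivity)]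
    field_simp
  rw [htρr]
  apply key_core hb1 hcb hu0 hu1 hv0 _ (by rwa [tanh_exp] at htri)
  rw [hsq]
  rwa [tanh_exp] at hv


lemma normSq_norm (z : ℂ) : ‖z‖^2 = Complex.normSq z := by
  rw [Complex.sq_norm]


lemma key_identity (a z : ℂ) :
    ‖1 - conj' a * z‖^2 = ‖a - z‖^2 + (1 - ‖a‖^2)*(1 - ‖z‖^2) := by
  rw [normSq_norm, normSq_norm, normSq_norm, normSq_norm]
  simp only [Complex.normSq_apply, Complex.sub_re, Complex.sub_im, Complex.one_re,
    Complex.one_im, Complex.mul_re, Complex.mul_im, Complex.conj_re, Complex.conj_im]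
  ring


lemma den_ne {a z : ℂ} (ha : ‖a‖ < 1) (hz : ‖z‖ ≤ 1) : 1 - conj' a * z ≠ 0 := by
  intro h
  have h1 : ‖conj' a * z‖ < 1 := by
    rw [norm_mul, RCLike.norm_conj]
    calc ‖a‖ * ‖z‖ ≤ ‖a‖ * 1 := by
          exact mul_le_mul_of_nonneg_left hz (norm_nonneg a)
      _ < 1 := by simpa using ha
  rw [sub_eq_zero] at h
  rw [← h] at h1
  simp at h1


lemma norm_den_pos {a z : ℂ} (ha : ‖a‖ < 1) (hz : ‖z‖ ≤ 1) : 0 < ‖1 - conj' a * z‖ :=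
  norm_pos_iff.2 (den_ne ha hz)


lemma pd_lt_one {a z : ℂ} (ha : ‖a‖ < 1) (hz : ‖z‖ < 1) :
    ‖(a - z)/(1 - conj' a * z)‖ < 1 := by
  rw [norm_div, div_lt_one (norm_den_pos ha hz.le)]
  have h := key_identity a z
  have h1 : 0 < (1 - ‖a‖^2)*(1 - ‖z‖^2) := by
    have := norm_nonneg a; have := norm_nonneg z
    apply mul_pos <;> nlinarith
  nlinarith [norm_nonneg (a - z), norm_nonneg (1 - conj' a * z)]


lemma norm_one_sub_comm (a z : ℂ) : ‖1 - conj' a * z‖ = ‖1 - conj' z * a‖ := by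
  rw [← RCLike.norm_conj (1 - conj' a * z)]
  congr 1
  simp [map_sub, map_mul, Complex.conj_conj, mul_comm]

-- basic case of the triangle inequality statement


lemma L3 {p q : ℂ} (hp : ‖p‖ < 1) (hq : ‖q‖ < 1) :
    ‖p - q‖ * (1 + ‖p‖*‖q‖) ≤ (‖p‖ + ‖q‖) * ‖1 - conj' p * q‖ := by
  have hs : (conj' p * q).re ≤ ‖p‖ * ‖q‖ := by
    calc (conj' p * q).re ≤ ‖conj' p * q‖ := Complex.re_le_norm _
      _ = ‖p‖ * ‖q‖ := by rw [norm_mul, RCLike.norm_conj]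
  have hs' : -(‖p‖ * ‖q‖) ≤ (conj' p * q).re := by
    have habs : |(conj' p * q).re| ≤ ‖conj' p * q‖ := by
      exact Complex.abs_re_le_norm _
    rw [norm_mul, RCLike.norm_conj] at habs
    have := abs_le.1 habs
    linarith [this.1]
  have e1 : ‖p - q‖^2 = ‖p‖^2 + ‖q‖^2 - 2*(conj' p * q).re := by
    rw [normSq_norm, normSq_norm, normSq_norm]
    simp only [Complex.normSq_apply, Complex.sub_re, Complex.sub_im, Complex.mul_re,
      Complex.mul_im, Complex.conj_re, Complex.conj_im]
    ring
  have e2 : ‖1 - conj' p * q‖^2 = 1 - 2*(conj' p * q).re + ‖p‖^2*‖q‖^2 := by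
    rw [normSq_norm, normSq_norm, normSq_norm]
    simp only [Complex.normSq_apply, Complex.sub_re, Complex.sub_im, Complex.one_re,
      Complex.one_im, Complex.mul_re, Complex.mul_im, Complex.conj_re, Complex.conj_im]
    ring
  have hP := norm_nonneg p; have hQ := norm_nonneg q
  have hPQ : (0:ℝ) ≤ 1 + ‖p‖*‖q‖ := by positivity
  apply le_of_pow_le_pow_left₀ (two_ne_zero) (by positivity)
  rw [mul_pow, mul_pow]
  rw [e1, e2]
  nlinarith [mul_nonneg (mul_nonneg (by linarith : (0:ℝ) ≤ ‖p‖*‖q‖ + (conj' p * q).re)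
      (by nlinarith : (0:ℝ) ≤ 1 - ‖p‖^2)) (by nlinarith : (0:ℝ) ≤ 1 - ‖q‖^2),
    norm_nonneg (p-q), norm_nonneg (1 - conj' p * q)]


lemma norm_one_sub_conj_mul_self {b : ℂ} (hb : ‖b‖ < 1) :
    ‖(1:ℂ) - conj' b * b‖ = 1 - ‖b‖^2 := by
  rw [mul_comm, Complex.mul_conj]
  have hcast : (1:ℂ) - (Complex.normSq b : ℂ) = ((1 - Complex.normSq b : ℝ) : ℂ) := by
    push_cast; ring
  rw [hcast, Complex.norm_real, Real.norm_eq_abs, abs_of_nonneg]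
  · rw [normSq_norm]
  · rw [← normSq_norm]; nlinarith [norm_nonneg b]


lemma pd_triangle {a b c : ℂ} (ha : ‖a‖ < 1) (hb : ‖b‖ < 1) (hc : ‖c‖ < 1) :
    ‖(a - c)/(1 - conj' a * c)‖ ≤
      (‖(b - a)/(1 - conj' b * a)‖ + ‖(b - c)/(1 - conj' b * c)‖) /
      (1 + ‖(b - a)/(1 - conj' b * a)‖ * ‖(b - c)/(1 - conj' b * c)‖) := by
  have h1 : (1 : ℂ) - conj' b * a ≠ 0 := den_ne hb ha.le
  have h2 : (1 : ℂ) - conj' b * c ≠ 0 := den_ne hb hc.le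
  have h3 : (1 : ℂ) - conj' a * c ≠ 0 := den_ne ha hc.le
  set P := (b - a)/(1 - conj' b * a) with hPdef
  set Q := (b - c)/(1 - conj' b * c) with hQdef
  have hP : ‖P‖ < 1 := pd_lt_one hb ha
  have hQ : ‖Q‖ < 1 := pd_lt_one hb hc
  have h1' : conj' ((1:ℂ) - conj' b * a) ≠ 0 := by
    intro hz
    exact h1 (by simpa using congrArg conj' hz)
  have id1 : P - Q = ((c - a)*(1 - conj' b * b))/((1 - conj' b * a)*(1 - conj' b * c)) := by
    rw [hPdef, hQdef, div_sub_div _ _ h1 h2]; congr 1; ring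
  have id2 : (1:ℂ) - conj' P * Q =
      ((1 - conj' b * b)*(1 - conj' a * c))/(conj' (1 - conj' b * a)*(1 - conj' b * c)) := by
    rw [hPdef, hQdef]
    simp only [map_div₀, map_sub, map_one, map_mul, Complex.conj_conj]
    have hD : ((1:ℂ) - b * conj' a) * (1 - conj' b * c) ≠ 0 :=
      mul_ne_zero (by simpa using h1') h2
    rw [div_mul_div_comm, one_sub_div hD, div_eq_div_iff hD hD]
    ring
  have hden : (0:ℝ) < ‖(1:ℂ) - conj' P * Q‖ := norm_den_pos hP hQ.le
  have hb2 : (0:ℝ) < 1 - ‖b‖^2 := by nlinarith [norm_nonneg b]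
  have hn1 : (0:ℝ) < ‖(1:ℂ) - conj' b * a‖ := norm_den_pos hb ha.le
  have hn2 : (0:ℝ) < ‖(1:ℂ) - conj' b * c‖ := norm_den_pos hb hc.le
  have hn3 : (0:ℝ) < ‖(1:ℂ) - conj' a * c‖ := norm_den_pos ha hc.le
  have e1 : ‖P - Q‖ = ‖a - c‖ * (1 - ‖b‖^2) / (‖(1:ℂ) - conj' b * a‖ * ‖(1:ℂ) - conj' b * c‖) := by
    rw [id1, norm_div, norm_mul, norm_mul, norm_one_sub_conj_mul_self hb, norm_sub_rev]
  have e2 : ‖(1:ℂ) - conj' P * Q‖ =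
      (1 - ‖b‖^2) * ‖(1:ℂ) - conj' a * c‖ / (‖(1:ℂ) - conj' b * a‖ * ‖(1:ℂ) - conj' b * c‖) := by
    rw [id2, norm_div, norm_mul, norm_mul, norm_one_sub_conj_mul_self hb, RCLike.norm_conj]
  have key : ‖(a - c)/(1 - conj' a * c)‖ = ‖P - Q‖ / ‖(1:ℂ) - conj' P * Q‖ := by
    rw [norm_div, e1, e2, div_div_div_comm,
      div_self (by positivity : (‖(1:ℂ) - conj' b * a‖ * ‖(1:ℂ) - conj' b * c‖) ≠ 0), div_one,
      mul_comm (1 - ‖b‖^2), mul_div_mul_right _ _ (ne_of_gt hb2)]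
  rw [key]
  have hl3 := L3 hP hQ
  have hpq : (0:ℝ) < 1 + ‖P‖ * ‖Q‖ := by positivity
  rw [div_le_div_iff₀ hden hpq]
  calc ‖P - Q‖ * (1 + ‖P‖ * ‖Q‖) ≤ (‖P‖ + ‖Q‖) * ‖(1:ℂ) - conj' P * Q‖ := hl3


lemma pd_symm (a z : ℂ) :
    ‖(a - z)/(1 - conj' a * z)‖ = ‖(z - a)/(1 - conj' z * a)‖ := by
  rw [norm_div, norm_div, norm_sub_rev, norm_one_sub_comm]

lemma phi_deriv {x z : ℂ} (hd : (1:ℂ) - conj' x * z ≠ 0) :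
    HasDerivAt (fun w => (x - w)/(1 - conj' x * w))
      ((conj' x * x - 1)/(1 - conj' x * z)^2) z := by
  have h1 : HasDerivAt (fun w : ℂ => x - w) (-1) z := by
    simpa using (hasDerivAt_id z).const_sub x
  have h2 : HasDerivAt (fun w : ℂ => 1 - conj' x * w) (-(conj' x)) z := by
    simpa using ((hasDerivAt_id z).const_mul (conj' x)).const_sub 1
  have h := h1.div h2 hd
  refine h.congr_deriv ?_
  ring

lemma det_restrict (c : ℂ) :
    ((ContinuousLinearMap.restrictScalars ℝ
      ((1 : ℂ →L[ℂ] ℂ).smulRight c)).det : ℝ) = Complex.normSq c := by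
  rw [ContinuousLinearMap.det]
  rw [← LinearMap.det_toMatrix Complex.basisOneI, Matrix.det_fin_two]
  simp [LinearMap.toMatrix_apply, Complex.coe_basisOneI, Complex.coe_basisOneI_repr,
    Complex.normSq_apply]

lemma phi_invol {x z : ℂ} (hx : ‖x‖ < 1) (hz : ‖z‖ < 1) :
    (x - (x - z)/(1 - conj' x * z))/(1 - conj' x * ((x - z)/(1 - conj' x * z))) = z := by
  have hd : (1:ℂ) - conj' x * z ≠ 0 := den_ne hx hz.le
  have h0 : (1:ℂ) - conj' x * x ≠ 0 := den_ne hx hx.le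
  have hnum : x - (x - z)/(1 - conj' x * z) = z * (1 - conj' x * x) / (1 - conj' x * z) := by
    rw [eq_div_iff hd, sub_mul, div_mul_cancel₀ _ hd]
    ring
  have hden : (1:ℂ) - conj' x * ((x - z)/(1 - conj' x * z)) =
      (1 - conj' x * x) / (1 - conj' x * z) := by
    field_simp
    ring
  rw [hnum, hden, div_div_div_eq, mul_assoc,
    mul_div_assoc, mul_comm (1 - conj' x * z) (1 - conj' x * x),
    div_self (mul_ne_zero h0 hd), mul_one]


set_option maxHeartbeats 1600000 in
/-- There is a decreasing function `A : (0,∞) → (0,∞)` such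
that for every `r > 0`, every `ρ ≥ r`, every `r`-separated `T ⊆ D` and every
`x ∈ D` with `d(x,t) ≥ ρ` for all `t ∈ T`, one has
`Σ_{t∈T} (1−|t|²)²·(1−|x|²)²/|1−conj(t)·x|⁴ ≤ π·A(r/2)·(1 − tanh²(ρ−r/2))`. -/
theorem far_tail_kernel_sum_bound :
    ∃ A : ℝ → ℝ, (∀ r ∈ Set.Ioi (0 : ℝ), 0 < A r) ∧ AntitoneOn A (Set.Ioi 0) ∧
      ∀ r > (0 : ℝ), ∀ ρ ≥ r, ∀ T : Set ℂ, T ⊆ ball (0 : ℂ) 1 →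
        IsSeparated r T → ∀ x ∈ ball (0 : ℂ) 1, (∀ t ∈ T, ρ ≤ hdist x t) →
          Summable (fun t : T =>
            (1 - ‖(t : ℂ)‖ ^ 2) ^ 2 * (1 - ‖x‖ ^ 2) ^ 2
              / ‖1 - (starRingEnd ℂ) (t : ℂ) * x‖ ^ 4) ∧
          (∑' t : T, (1 - ‖(t : ℂ)‖ ^ 2) ^ 2 * (1 - ‖x‖ ^ 2) ^ 2
              / ‖1 - (starRingEnd ℂ) (t : ℂ) * x‖ ^ 4)
            ≤ Real.pi * A (r / 2) * (1 - Real.tanh (ρ - r / 2) ^ 2) := by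
  refine ⟨fun s => 81 / (Real.pi * Real.tanh (2*s)^2), ?_, ?_, ?_⟩
  · intro s hs
    have hs' : (0:ℝ) < s := Set.mem_Ioi.1 hs
    have h : 0 < Real.tanh (2*s) := tanh_pos (by linarith)
    have hπ := Real.pi_pos
    exact div_pos (by norm_num) (mul_pos hπ (pow_pos h 2))
  · intro s hs s' hs' hss
    have h0 : (0:ℝ) < s := Set.mem_Ioi.1 hs
    have h1 : 0 < Real.tanh (2*s) := tanh_pos (by linarith)
    have h2 : Real.tanh (2*s) ≤ Real.tanh (2*s') := tanh_mono (by linarith)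
    have hπ := Real.pi_pos
    exact div_le_div_of_nonneg_left (by norm_num) (mul_pos hπ (pow_pos h1 2))
      (mul_le_mul_of_nonneg_left (pow_le_pow_left₀ h1.le h2 2) hπ.le)
  intro r hr ρ hρ T hT hsep x hx hfar
  have hπ := Real.pi_pos
  have hx1 : ‖x‖ < 1 := mem_ball_zero_iff.1 hx
  have htr : 0 < Real.tanh r := tanh_pos hr
  have htr1 : Real.tanh r < 1 := tanh_lt_one r
  set τ' := Real.tanh (ρ - r/2) with hτ'
  have hτ'0 : 0 ≤ τ' := tanh_nonneg (by linarith)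
  have hτ'1 : τ' < 1 := tanh_lt_one _
  set δ : ℂ → ℝ := fun t => Real.tanh r * (1 - ‖t‖^2)/4 with hδ
  set S : ℂ → ℝ := fun t => (1 - ‖t‖^2)^2 * (1 - ‖x‖^2)^2 / ‖1 - conj' t * x‖^4 with hS
  set W : ℂ → ℝ := fun z => (1 - ‖x‖^2)^2 / ‖1 - conj' x * z‖^4 with hW
  set Ω : Set ℂ := {z : ℂ | ‖z‖ < 1 ∧ τ' ≤ ‖(x - z)/(1 - conj' x * z)‖} with hΩ
  set K : ℝ := Real.pi * Real.tanh r^2/81 with hK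
  have hKpos : 0 < K := by rw [hK]; positivity
  have hmem : ∀ t ∈ T, ‖t‖ < 1 := fun t ht => mem_ball_zero_iff.1 (hT ht)
  have h1sq : ∀ t : ℂ, ‖t‖ < 1 → 0 < 1 - ‖t‖^2 := by
    intro t ht; nlinarith [norm_nonneg t]
  have hδpos : ∀ t ∈ T, 0 < δ t := by
    intro t ht
    exact div_pos (mul_pos htr (h1sq t (hmem t ht))) (by norm_num)
  have hSnonneg : ∀ t : ℂ, 0 ≤ S t := by
    intro t; rw [hS]; positivity
  have hWnonneg : ∀ z : ℂ, 0 ≤ W z := by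
    intro z; rw [hW]; positivity
  -- disjointness of the balls
  have hdisj : ∀ t ∈ T, ∀ t' ∈ T, t ≠ t' → Disjoint (ball t (δ t)) (ball t' (δ t')) := by
    intro t ht t' ht' hne
    apply ball_disjoint_ball
    rw [dist_eq_norm]
    have hA := hmem t ht
    have hB := hmem t' ht'
    have hsep' : r ≤ arctanh ‖(t - t')/(1 - conj' t * t')‖ := hsep t ht t' ht' hne
    have h2 : Real.tanh r ≤ ‖(t - t')/(1 - conj' t * t')‖ :=
      tanh_le_of_le_arctanh (norm_nonneg _) (pd_lt_one hA hB) hsep'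
    rw [norm_div] at h2
    have hden : 0 < ‖(1:ℂ) - conj' t * t'‖ := norm_den_pos hA hB.le
    have h3 : Real.tanh r * ‖(1:ℂ) - conj' t * t'‖ ≤ ‖t - t'‖ := (le_div_iff₀ hden).1 h2
    have h4 : 1 - ‖t‖*‖t'‖ ≤ ‖(1:ℂ) - conj' t * t'‖ := by
      have h5 := norm_sub_norm_le (1:ℂ) (conj' t * t')
      rw [norm_one, norm_mul, RCLike.norm_conj] at h5
      exact h5
    have hab : ‖t‖*‖t'‖ < 1 := by nlinarith [norm_nonneg t, norm_nonneg t']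
    have hkey : (1 - ‖t‖^2)/4 + (1 - ‖t'‖^2)/4 ≤ 1 - ‖t‖*‖t'‖ := by
      nlinarith [sq_nonneg (‖t‖ - ‖t'‖), hab]
    have h6 : δ t + δ t' = Real.tanh r * ((1 - ‖t‖^2)/4 + (1 - ‖t'‖^2)/4) := by
      rw [hδ]; ring
    rw [h6]
    calc Real.tanh r * ((1 - ‖t‖^2)/4 + (1 - ‖t'‖^2)/4)
        ≤ Real.tanh r * (1 - ‖t‖*‖t'‖) := mul_le_mul_of_nonneg_left hkey htr.le
      _ ≤ Real.tanh r * ‖(1:ℂ) - conj' t * t'‖ := mul_le_mul_of_nonneg_left h4 htr.le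
      _ ≤ ‖t - t'‖ := h3
  -- each ball lies in Ω
  have hsub : ∀ t ∈ T, ball t (δ t) ⊆ Ω := by
    intro t ht z hz
    have hA := hmem t ht
    have h1t : 0 < 1 - ‖t‖^2 := h1sq t hA
    have hzt : ‖z - t‖ < δ t := by rwa [mem_ball, dist_eq_norm] at hz
    have hznorm : ‖z‖ ≤ ‖t‖ + ‖z - t‖ := by
      calc ‖z‖ = ‖z - t + t‖ := by ring_nf
        _ ≤ ‖z - t‖ + ‖t‖ := norm_add_le _ _
        _ = ‖t‖ + ‖z - t‖ := by ring
    have hδle : δ t ≤ (1 - ‖t‖^2)/4 := by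
      rw [hδ]
      have := mul_le_of_le_one_left h1t.le htr1.le
      linarith
    have hz1 : ‖z‖ < 1 := by nlinarith [norm_nonneg t]
    refine ⟨hz1, ?_⟩
    have hdenz : (3/4)*(1 - ‖t‖^2) ≤ 1 - ‖z‖*‖t‖ := by
      nlinarith [norm_nonneg t, norm_nonneg z]
    have hv : ‖(z - t)/(1 - conj' z * t)‖ ≤ Real.tanh r / 3 := by
      rw [norm_div]
      have hd4 : (3/4)*(1 - ‖t‖^2) ≤ ‖(1:ℂ) - conj' z * t‖ := by
        have h5 := norm_sub_norm_le (1:ℂ) (conj' z * t)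
        rw [norm_one, norm_mul, RCLike.norm_conj] at h5
        linarith
      have hdpos : 0 < ‖(1:ℂ) - conj' z * t‖ := norm_den_pos hz1 hA.le
      rw [div_le_div_iff₀ hdpos (by norm_num)]
      have hzt' : ‖z - t‖ * 3 ≤ Real.tanh r * ((3/4)*(1 - ‖t‖^2)) := by
        rw [hδ] at hzt; nlinarith
      calc ‖z - t‖ * 3 ≤ Real.tanh r * ((3/4)*(1 - ‖t‖^2)) := hzt'
        _ ≤ Real.tanh r * ‖(1:ℂ) - conj' z * t‖ := mul_le_mul_of_nonneg_left hd4 htr.le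
    have htri := pd_triangle hx1 hz1 hA
    have hu1 : ‖(z - x)/(1 - conj' z * x)‖ < 1 := pd_lt_one hz1 hx1
    have hfar' : Real.tanh ρ ≤ ‖(x - t)/(1 - conj' x * t)‖ :=
      tanh_le_of_le_arctanh (norm_nonneg _) (pd_lt_one hx1 hA) (hfar t ht)
    have hres := key_arith hr hρ (norm_nonneg _) hu1 (norm_nonneg _) hv
      (le_trans hfar' htri)
    rw [pd_symm]
    exact hres
  -- measurability of Ω
  have hgm : Measurable (fun z : ℂ => ‖(x - z)/(1 - conj' x * z)‖) :=
    ((measurable_const.sub measurable_id).div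
      (measurable_const.sub (measurable_const.mul measurable_id))).norm
  have hΩm : MeasurableSet Ω := by
    have h1 : Ω = (ball (0:ℂ) 1) ∩ {z : ℂ | τ' ≤ ‖(x - z)/(1 - conj' x * z)‖} := by
      ext z
      simp only [hΩ, Set.mem_setOf_eq, Set.mem_inter_iff, mem_ball_zero_iff]
    rw [h1]
    exact measurableSet_ball.inter (measurableSet_le measurable_const hgm)
  -- change of variables bound
  have hCoV : ∫⁻ z in Ω, ENNReal.ofReal (W z) ≤ ENNReal.ofReal (Real.pi * (1 - τ'^2)) := by
    set φ : ℂ → ℂ := fun w => (x - w)/(1 - conj' x * w) with hφ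
    set f' : ℂ → ℂ →L[ℝ] ℂ := fun z => (ContinuousLinearMap.restrictScalars ℝ
      ((1 : ℂ →L[ℂ] ℂ).smulRight ((conj' x * x - 1)/(1 - conj' x * z)^2))) with hf'
    have hder : ∀ z ∈ Ω, HasFDerivWithinAt φ (f' z) Ω z := by
      intro z hz
      exact (((phi_deriv (den_ne hx1 hz.1.le)).hasFDerivAt.restrictScalars ℝ)).hasFDerivWithinAt
    have hinj : Set.InjOn φ Ω := by
      intro z1 h1 z2 h2 heq
      have e1 := phi_invol hx1 h1.1
      have e2 := phi_invol hx1 h2.1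
      have heq' : (x - z1)/(1 - conj' x * z1) = (x - z2)/(1 - conj' x * z2) := heq
      calc z1 = _ := e1.symm
        _ = _ := by rw [heq']
        _ = z2 := e2
    have heq := lintegral_abs_det_fderiv_eq_addHaar_image volume hΩm hder hinj
    have hdetW : ∀ z ∈ Ω, ENNReal.ofReal |(f' z).det| = ENNReal.ofReal (W z) := by
      intro z hz
      congr 1
      have hd : (1:ℂ) - conj' x * z ≠ 0 := den_ne hx1 hz.1.le
      rw [hf']
      rw [det_restrict]
      rw [abs_of_nonneg (Complex.normSq_nonneg _)]
      rw [← normSq_norm, norm_div, norm_pow]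
      rw [norm_sub_rev, norm_one_sub_conj_mul_self hx1]
      rw [hW, div_pow]
      ring_nf
    have hIeq : ∫⁻ z in Ω, ENNReal.ofReal (W z) = volume (φ '' Ω) := by
      rw [← heq]
      apply setLIntegral_congr_fun hΩm
      exact fun z hz => (hdetW z hz).symm
    rw [hIeq]
    have himg : φ '' Ω ⊆ closedBall (0:ℂ) 1 \ ball (0:ℂ) τ' := by
      rintro w ⟨z, hz, rfl⟩
      constructor
      · rw [mem_closedBall, dist_zero_right]
        exact (pd_lt_one hx1 hz.1).le
      · rw [mem_ball, dist_zero_right]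
        push_neg
        exact hz.2
    calc volume (φ '' Ω) ≤ volume (closedBall (0:ℂ) 1 \ ball (0:ℂ) τ') :=
          measure_mono himg
      _ = ENNReal.ofReal (Real.pi * (1 - τ'^2)) := by
        rw [measure_diff (ball_subset_closedBall.trans (closedBall_subset_closedBall hτ'1.le))
          measurableSet_ball.nullMeasurableSet (measure_ball_lt_top.ne)]
        rw [Complex.volume_closedBall, Complex.volume_ball]
        rw [← NNReal.coe_real_pi, ← ENNReal.ofReal_coe_nnreal]
        rw [← ENNReal.ofReal_pow zero_le_one, ← ENNReal.ofReal_pow hτ'0]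
        rw [← ENNReal.ofReal_mul (by positivity), ← ENNReal.ofReal_mul (by positivity)]
        rw [← ENNReal.ofReal_sub _ (by positivity)]
        congr 1
        push_cast
        ring
  -- per-ball lower bound
  have hball : ∀ t ∈ T, ENNReal.ofReal (K * S t) ≤
      ∫⁻ z in ball t (δ t), ENNReal.ofReal (W z) := by
    intro t ht
    have hA := hmem t ht
    have h1t : 0 < 1 - ‖t‖^2 := h1sq t hA
    have hdxt : 0 < ‖(1:ℂ) - conj' x * t‖ := norm_den_pos hx1 hA.le
    set c : ℝ := (16/81) * ((1 - ‖x‖^2)^2/‖(1:ℂ) - conj' x * t‖^4) with hc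
    have hcpos : 0 < c := by
      rw [hc]
      have := h1sq x hx1
      positivity
    have hWlow : ∀ z ∈ ball t (δ t), c ≤ W z := by
      intro z hz
      have hzt : ‖z - t‖ < δ t := by rwa [mem_ball, dist_eq_norm] at hz
      have hδle : δ t ≤ (1 - ‖t‖^2)/4 := by
        rw [hδ]
        have := mul_le_of_le_one_left h1t.le htr1.le
        linarith
      have hlow : 1 - ‖t‖^2 ≤ 2 * ‖(1:ℂ) - conj' x * t‖ := by
        have h5 := norm_sub_norm_le (1:ℂ) (conj' x * t)
        rw [norm_one, norm_mul, RCLike.norm_conj] at h5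
        nlinarith [norm_nonneg t, norm_nonneg x, mul_le_one₀ hx1.le (norm_nonneg t) hA.le,
          mul_le_mul_of_nonneg_right hx1.le (norm_nonneg t)]
      have hup : ‖(1:ℂ) - conj' x * z‖ ≤ (3/2) * ‖(1:ℂ) - conj' x * t‖ := by
        have hsplit : (1:ℂ) - conj' x * z = (1 - conj' x * t) - conj' x * (z - t) := by ring
        rw [hsplit]
        calc ‖(1 - conj' x * t) - conj' x * (z - t)‖
            ≤ ‖(1:ℂ) - conj' x * t‖ + ‖conj' x * (z - t)‖ := norm_sub_le _ _
          _ ≤ ‖(1:ℂ) - conj' x * t‖ + ‖z - t‖ := by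
              rw [norm_mul, RCLike.norm_conj]
              nlinarith [norm_nonneg (z - t), norm_nonneg x,
                mul_le_mul_of_nonneg_right hx1.le (norm_nonneg (z - t))]
          _ ≤ (3/2) * ‖(1:ℂ) - conj' x * t‖ := by nlinarith
      simp only [hW, hc]
      have hx2 := h1sq x hx1
      have hzΩ := hsub t ht hz
      have hdz : 0 < ‖(1:ℂ) - conj' x * z‖ := norm_den_pos hx1 hzΩ.1.le
      have h4 : ‖(1:ℂ) - conj' x * z‖^4 ≤ ((3/2) * ‖(1:ℂ) - conj' x * t‖)^4 := by
        apply pow_le_pow_left₀ (norm_nonneg _) hup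
      calc (16/81 : ℝ) * ((1 - ‖x‖^2)^2 / ‖(1:ℂ) - conj' x * t‖^4)
          = (1 - ‖x‖^2)^2 / (((3/2) * ‖(1:ℂ) - conj' x * t‖)^4) := by
            have hb := pow_pos hdxt 4
            field_simp
            ring
        _ ≤ (1 - ‖x‖^2)^2 / ‖(1:ℂ) - conj' x * z‖^4 := by gcongr
    calc ENNReal.ofReal (K * S t)
        = ENNReal.ofReal c * volume (ball t (δ t)) := by
          rw [Complex.volume_ball]
          have hconv : (NNReal.pi : ENNReal) = ENNReal.ofReal Real.pi := by
            rw [← NNReal.coe_real_pi, ENNReal.ofReal_coe_nnreal]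
          rw [hconv, ← ENNReal.ofReal_pow (hδpos t ht).le,
            ← ENNReal.ofReal_mul (by positivity), ← ENNReal.ofReal_mul hcpos.le]
          congr 1
          simp only [hK, hS, hc, hδ]
          rw [norm_one_sub_comm]
          field_simp
          ring
      _ = ∫⁻ _ in ball t (δ t), ENNReal.ofReal c := by rw [setLIntegral_const, mul_comm]
      _ ≤ ∫⁻ z in ball t (δ t), ENNReal.ofReal (W z) := by
          apply setLIntegral_mono' measurableSet_ball
          exact fun z hz => ENNReal.ofReal_le_ofReal (hWlow z hz)
  -- countability
  have hcnt : T.Countable := by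
    apply Set.PairwiseDisjoint.countable_of_isOpen
      (s := fun t : ℂ => ball t (δ t))
    · intro t ht t' ht' hne
      exact hdisj t ht t' ht' hne
    · exact fun t _ => isOpen_ball
    · exact fun t ht => ⟨t, mem_ball_self (hδpos t ht)⟩
  haveI : Countable ↥T := hcnt.to_subtype
  -- total bound in ℝ≥0∞
  have htotal : ∑' (t : T), ENNReal.ofReal (K * S (t : ℂ)) ≤
      ENNReal.ofReal (Real.pi * (1 - τ'^2)) := by
    calc ∑' (t : T), ENNReal.ofReal (K * S (t : ℂ))
        ≤ ∑' (t : T), ∫⁻ z in ball (t : ℂ) (δ (t : ℂ)), ENNReal.ofReal (W z) :=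
          ENNReal.tsum_le_tsum (fun t => hball t.1 t.2)
      _ = ∫⁻ z in ⋃ (t : T), ball (t : ℂ) (δ (t : ℂ)), ENNReal.ofReal (W z) := by
          rw [lintegral_iUnion (fun t => measurableSet_ball)]
          intro t t' hne
          exact hdisj t.1 t.2 t'.1 t'.2 (fun h => hne (Subtype.ext h))
      _ ≤ ∫⁻ z in Ω, ENNReal.ofReal (W z) :=
          lintegral_mono_set (Set.iUnion_subset fun t => hsub t.1 t.2)
      _ ≤ ENNReal.ofReal (Real.pi * (1 - τ'^2)) := hCoV
  -- extract summability and the real bound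
  set B : ℝ := Real.pi * (1 - τ'^2) / K with hB
  have hBnonneg : 0 ≤ B := by
    rw [hB]
    have h1 : 0 ≤ 1 - τ'^2 := by nlinarith
    positivity
  have htsum2 : ∑' (t : T), ENNReal.ofReal (S (t : ℂ)) ≤ ENNReal.ofReal B := by
    have hmul : ∀ t : T, ENNReal.ofReal (K * S (t : ℂ)) =
        ENNReal.ofReal K * ENNReal.ofReal (S (t : ℂ)) := by
      intro t; rw [ENNReal.ofReal_mul hKpos.le]
    rw [hB, ENNReal.ofReal_div_of_pos hKpos]
    rw [ENNReal.le_div_iff_mul_le (Or.inl (by simp [hKpos.not_ge, ENNReal.ofReal_eq_zero]))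
      (Or.inl ENNReal.ofReal_ne_top)]
    calc (∑' (t : T), ENNReal.ofReal (S (t : ℂ))) * ENNReal.ofReal K
        = ∑' (t : T), ENNReal.ofReal (K * S (t : ℂ)) := by
          rw [← ENNReal.tsum_mul_right]
          exact tsum_congr fun t => by rw [hmul t, mul_comm]
      _ ≤ ENNReal.ofReal (Real.pi * (1 - τ'^2)) := htotal
  have hne_top : ∑' (t : T), ENNReal.ofReal (S (t : ℂ)) ≠ ⊤ :=
    ne_top_of_le_ne_top ENNReal.ofReal_ne_top htsum2
  have hcoe : ∀ t : T, ENNReal.ofReal (S (t : ℂ)) = ((S (t : ℂ)).toNNReal : ENNReal) := by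
    intro t; rfl
  have hsummable_nn : Summable (fun t : T => (S (t : ℂ)).toNNReal) := by
    apply ENNReal.tsum_coe_ne_top_iff_summable.1
    exact hne_top
  have hsummable : Summable (fun t : T => S (t : ℂ)) := by
    have h1 : Summable (fun t : T => ((S (t : ℂ)).toNNReal : ℝ)) :=
      NNReal.summable_coe.2 hsummable_nn
    apply h1.congr
    intro t
    exact Real.coe_toNNReal _ (hSnonneg (t : ℂ))
  have htsum_real : ∑' (t : T), S (t : ℂ) ≤ B := by
    have h1 : ∑' (t : T), S (t : ℂ) = ((∑' (t : T), (S (t : ℂ)).toNNReal : NNReal) : ℝ) := by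
      rw [NNReal.coe_tsum]
      exact tsum_congr (fun t => (Real.coe_toNNReal _ (hSnonneg (t : ℂ))).symm)
    rw [h1]
    have h2 : ((∑' (t : T), (S (t : ℂ)).toNNReal : NNReal) : ENNReal) ≤ ENNReal.ofReal B := by
      rw [ENNReal.coe_tsum hsummable_nn]
      exact htsum2
    have h3 := ENNReal.toReal_mono ENNReal.ofReal_ne_top h2
    rw [ENNReal.coe_toReal, ENNReal.toReal_ofReal hBnonneg] at h3
    exact h3
  have hBeq : B = Real.pi * (81 / (Real.pi * Real.tanh (2*(r/2))^2)) * (1 - τ'^2) := by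
    rw [hB, hK]
    have h2r : 2*(r/2) = r := by ring
    rw [h2r]
    field_simp
  constructor
  · exact hsummable
  · calc ∑' (t : T), S (t : ℂ) ≤ B := htsum_real
      _ = _ := hBeq
end
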